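/- arXiv:1011.1703 — 9 statements merged into one kernel-verified Lean document; each statement's English description precedes it below -/
import Mathlib

section
/- Under the stated hypotheses (Kantorovich), the Newton iterates x_{k+1} = x_k − [P'(x_k)]⁻¹ P(x_k) starting from x₀ are well defined (in particular each P'(x_k) has a bounded linear inverse), remain in the closed ball Ω* = {x : ‖x − x₀‖ ≤ 2η}, and converge to a point x* ∈ Ω* satisfying P(x*) = 0; moreover, for every k ≥ 0, ‖x* − x_k‖ ≤ (η/h) · (2h)^{2^k} / 2^k. -/
/-!
Newton's method is controlled by two majorants, `b k ≥ ‖P'(x k)⁻¹‖` and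
`e k ≥ ‖x (k+1) - x k‖`. The Banach perturbation lemma and the Taylor bound
`‖P y - P x - P' x (y - x)‖ ≤ K/2 ‖y - x‖²` propagate them as `b (k+1) = b k / (1 - h k)` and
`e (k+1) = K/2 · b (k+1) · (e k)²`, where `h k = b k K e k`. Then `2 h (k+1) ≤ (2 h k)²`, so
`2 h k ≤ (2h)^(2^k) ≤ 1` and `e (k+1) ≤ h k · e k ≤ e k / 2`: the iterates form a Cauchy
sequence staying in the ball, whose tail from `x k` has length at most
`2 e k ≤ (η/h)(2h)^(2^k)/2^k`. The limit is a root since `‖P (x (k+1))‖ ≤ K/2 ‖x (k+1) - x k‖² → 0`.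
-/

open Set Metric Filter Topology

theorem ContinuousLinearMap.exists_inverse_of_norm_mul_norm_sub_lt {𝕜 E F : Type*}
    [NontriviallyNormedField 𝕜] [NormedAddCommGroup E] [NormedSpace 𝕜 E] [CompleteSpace E]
    [NormedAddCommGroup F] [NormedSpace 𝕜 F] {A A' : E →L[𝕜] F} {i : F →L[𝕜] E}
    (hl : i.comp A = .id 𝕜 E) (hr : A.comp i = .id 𝕜 F) (hlt : ‖i‖ * ‖A - A'‖ < 1) :
    ∃ i' : F →L[𝕜] E, i'.comp A' = .id 𝕜 E ∧ A'.comp i' = .id 𝕜 F ∧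
      ‖i'‖ ≤ ‖i‖ / (1 - ‖i‖ * ‖A - A'‖) := by
  -- `i' := (i A')⁻¹ i`, where `i A' = 1 - i (A - A')` is inverted by a Neumann series.
  set T := i.comp A'
  have hT : 1 - T = i.comp (A - A') := by
    rw [ContinuousLinearMap.comp_sub, hl, ContinuousLinearMap.one_def]
  have hT_lt : ‖1 - T‖ < 1 := hT ▸ (i.opNorm_comp_le _).trans_lt hlt
  set u := Units.oneSub (1 - T) hT_lt
  have hu : (u : E →L[𝕜] E) = T := by simp [u]
  have hA' : A.comp T = A' := by
    rw [← ContinuousLinearMap.comp_assoc, hr, ContinuousLinearMap.id_comp]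
  have hu_norm : ‖(↑u⁻¹ : E →L[𝕜] E)‖ ≤ (1 - ‖i‖ * ‖A - A'‖)⁻¹ := by
    have h1 : ‖(1 : E →L[𝕜] E)‖ ≤ 1 := ContinuousLinearMap.norm_id_le
    have h2 : ‖1 - T‖ ≤ ‖i‖ * ‖A - A'‖ := hT ▸ i.opNorm_comp_le _
    have h3 := tsum_geometric_le_of_norm_lt_one _ hT_lt
    have h4 := inv_anti₀ (sub_pos.2 hlt) (sub_le_sub_left h2 1)
    change ‖∑' n : ℕ, (1 - T) ^ n‖ ≤ _
    linarith
  refine ⟨(↑u⁻¹ : E →L[𝕜] E).comp i, ?_, ?_, ?_⟩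
  · change (↑u⁻¹ : E →L[𝕜] E) * T = 1
    rw [← hu, u.inv_mul]
  · rw [← hA', ← hu, ContinuousLinearMap.comp_assoc, ← ContinuousLinearMap.comp_assoc _ _ i,
      ← ContinuousLinearMap.mul_def, u.mul_inv]
    exact hr
  · calc ‖(↑u⁻¹ : E →L[𝕜] E).comp i‖ ≤ ‖(↑u⁻¹ : E →L[𝕜] E)‖ * ‖i‖ := opNorm_comp_le _ _
      _ ≤ (1 - ‖i‖ * ‖A - A'‖)⁻¹ * ‖i‖ := by gcongr
      _ = ‖i‖ / (1 - ‖i‖ * ‖A - A'‖) := by rw [div_eq_inv_mul]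

theorem exists_tendsto_dist_le_two_mul_of_dist_succ_le {α : Type*} [PseudoMetricSpace α]
    [CompleteSpace α] {x : ℕ → α} {e : ℕ → ℝ} (hx : ∀ k, dist (x k) (x (k + 1)) ≤ e k)
    (he : ∀ k, e (k + 1) ≤ e k / 2) :
    ∃ a, Tendsto x atTop (𝓝 a) ∧ ∀ k, dist (x k) a ≤ 2 * e k := by
  have he_geom : ∀ k j, e (k + j) ≤ e k / 2 ^ j := by
    intro k j
    induction j with
    | zero => simp
    | succ j ih =>
      calc e (k + (j + 1)) ≤ e (k + j) / 2 := he _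
        _ ≤ e k / 2 ^ (j + 1) := by rw [pow_succ, ← div_div]; linarith
  have hshift : ∀ k j, dist (x (k + j)) (x (k + j + 1)) ≤ 2 * e k / 2 / 2 ^ j := fun k j => by
    simpa using (hx _).trans (he_geom k j)
  obtain ⟨a, ha⟩ := cauchySeq_tendsto_of_complete <|
    cauchySeq_of_le_geometric_two (C := 2 * e 0) (by simpa using hshift 0)
  refine ⟨a, ha, fun k => ?_⟩
  simpa using dist_le_of_le_geometric_two_of_tendsto₀ (f := fun j => x (k + j)) (hshift k)
    (by simpa [add_comm, Function.comp_def] using ha.comp (tendsto_add_atTop_nat k))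

theorem le_pow_two_pow_of_le_sq {q : ℕ → ℝ} (hq : ∀ k, 0 ≤ q k)
    (h : ∀ k, q (k + 1) ≤ q k ^ 2) (k : ℕ) : q k ≤ q 0 ^ 2 ^ k := by
  induction k with
  | zero => simp
  | succ k ih =>
    calc q (k + 1) ≤ q k ^ 2 := h k
      _ ≤ (q 0 ^ 2 ^ k) ^ 2 := by gcongr; exact hq k
      _ = q 0 ^ 2 ^ (k + 1) := by rw [← pow_mul, pow_succ]

theorem le_div_mul_pow_two_pow_of_le_sq {q e : ℕ → ℝ} (hq : ∀ k, 0 ≤ q k)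
    (hq_succ : ∀ k, q (k + 1) ≤ q k ^ 2) (hq0 : 0 < q 0) (he : ∀ k, 0 ≤ e k)
    (he_succ : ∀ k, e (k + 1) ≤ q k / 2 * e k) (k : ℕ) :
    e k ≤ e 0 / q 0 * q 0 ^ 2 ^ k / 2 ^ k := by
  induction k with
  | zero => field_simp; simp
  | succ k ih =>
    calc e (k + 1) ≤ q k / 2 * e k := he_succ k
      _ ≤ q 0 ^ 2 ^ k / 2 * (e 0 / q 0 * q 0 ^ 2 ^ k / 2 ^ k) := by
          gcongr
          exacts [he k, le_pow_two_pow_of_le_sq hq hq_succ k]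
      _ = e 0 / q 0 * q 0 ^ 2 ^ (k + 1) / 2 ^ (k + 1) := by rw [pow_succ 2 k, pow_mul]; ring

theorem exists_seq_of_forall_exists_step {α : Type*} {Q : α → Prop} {R : α → α → Prop}
    (step : ∀ a, Q a → ∃ a', Q a' ∧ R a a') {a₀ : α} (h₀ : Q a₀) :
    ∃ f : ℕ → α, f 0 = a₀ ∧ ∀ k, Q (f k) ∧ R (f k) (f (k + 1)) := by
  choose g hg using fun a : Subtype Q => step a a.2
  let F : Subtype Q → Subtype Q := fun a => ⟨g a, (hg a).1⟩
  refine ⟨fun k => (F^[k] ⟨a₀, h₀⟩).1, rfl, fun k => ⟨(F^[k] _).2, ?_⟩⟩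
  dsimp only
  rw [Function.iterate_succ_apply']
  exact (hg _).2

theorem newton_majorant_step_le {b K e : ℝ} (hb : 0 ≤ b) (hK : 0 ≤ K) (he : 0 ≤ e)
    (h : b * K * e ≤ 1 / 2) : K / 2 * (b / (1 - b * K * e)) * e ^ 2 ≤ b * K * e * e := by
  have hs : 0 ≤ b * K * e := by positivity
  rw [show K / 2 * (b / (1 - b * K * e)) * e ^ 2 = b * K * e * e / (2 * (1 - b * K * e)) by
    field_simp [show 1 - b * K * e ≠ 0 by linarith]]
  exact div_le_self (by positivity) (by linarith)

theorem newton_majorant_mul_le {b K e : ℝ} (hb : 0 ≤ b) (hK : 0 ≤ K) (he : 0 ≤ e)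
    (h : b * K * e ≤ 1 / 2) :
    2 * (b / (1 - b * K * e) * K * (K / 2 * (b / (1 - b * K * e)) * e ^ 2)) ≤
      (2 * (b * K * e)) ^ 2 := by
  have hs : 0 ≤ b * K * e := by positivity
  rw [show 2 * (b / (1 - b * K * e) * K * (K / 2 * (b / (1 - b * K * e)) * e ^ 2)) =
      (b * K * e / (1 - b * K * e)) ^ 2 by
    field_simp [show 1 - b * K * e ≠ 0 by linarith]]
  gcongr
  · exact div_nonneg hs (by linarith)
  · rw [div_le_iff₀ (by linarith)]
    nlinarith

section Kantorovich

variable {X Y : Type*} [NormedAddCommGroup X] [NormedSpace ℝ X]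
  [NormedAddCommGroup Y] [NormedSpace ℝ Y]
  {f : X → Y} {f' : X → X →L[ℝ] Y} {s : Set X} {K : ℝ}

theorem Convex.norm_image_sub_sub_fderiv_apply_le (hs : Convex ℝ s)
    (hf : ∀ z ∈ s, HasFDerivAt f (f' z) z)
    (hK : ∀ u ∈ s, ∀ v ∈ s, ‖f' u - f' v‖ ≤ K * ‖u - v‖) {a b : X} (ha : a ∈ s) (hb : b ∈ s) :
    ‖f b - f a - f' a (b - a)‖ ≤ K / 2 * ‖b - a‖ ^ 2 := by
  set v := b - a
  have hseg : ∀ t ∈ Icc (0 : ℝ) 1, a + t • v ∈ s := fun t ht => hs.add_smul_sub_mem ha hb ht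
  set g : ℝ → Y := fun t => f (a + t • v) - f a - t • f' a v
  have hg : ∀ t ∈ Icc (0 : ℝ) 1, HasDerivAt g ((f' (a + t • v) - f' a) v) t := by
    intro t ht
    have hline : HasDerivAt (fun t : ℝ => a + t • v) v t := by
      simpa using ((hasDerivAt_id t).smul_const v).const_add a
    exact ((((hf _ (hseg t ht)).comp_hasDerivAt t hline).sub_const (f a)).sub
      ((hasDerivAt_id t).smul_const (f' a v))).congr_deriv (by simp)
  have hbound : ∀ t ∈ Ico (0 : ℝ) 1, ‖(f' (a + t • v) - f' a) v‖ ≤ K * ‖v‖ ^ 2 * t := by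
    intro t ht
    calc ‖(f' (a + t • v) - f' a) v‖ ≤ K * ‖a + t • v - a‖ * ‖v‖ :=
          ((f' _ - f' a).le_opNorm v).trans <| mul_le_mul_of_nonneg_right
            (hK _ (hseg t (Ico_subset_Icc_self ht)) a ha) (norm_nonneg v)
      _ = K * ‖v‖ ^ 2 * t := by
          rw [add_sub_cancel_left, norm_smul, Real.norm_of_nonneg ht.1]; ring
  have hquad : ∀ t, HasDerivAt (fun t : ℝ => K / 2 * ‖v‖ ^ 2 * t ^ 2) (K * ‖v‖ ^ 2 * t) t := by
    intro t
    exact ((hasDerivAt_pow 2 t).const_mul (K / 2 * ‖v‖ ^ 2)).congr_deriv (by norm_num; ring)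
  have := image_norm_le_of_norm_deriv_right_le_deriv_boundary
    (fun t ht => (hg t ht).continuousAt.continuousWithinAt)
    (fun t ht => (hg t (Ico_subset_Icc_self ht)).hasDerivWithinAt) (by simp [g]) hquad hbound
    (right_mem_Icc.2 zero_le_one)
  simpa [g, v] using this

theorem Convex.norm_image_newton_step_le (hs : Convex ℝ s)
    (hf : ∀ z ∈ s, HasFDerivAt f (f' z) z)
    (hK : ∀ u ∈ s, ∀ v ∈ s, ‖f' u - f' v‖ ≤ K * ‖u - v‖) {x : X} {i : Y →L[ℝ] X}
    (hr : (f' x).comp i = .id ℝ Y) (hx : x ∈ s) (hx' : x - i (f x) ∈ s) :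
    ‖f (x - i (f x))‖ ≤ K / 2 * ‖i (f x)‖ ^ 2 := by
  have hlin : f' x (x - i (f x) - x) = -f x := by
    rw [sub_sub_cancel_left, map_neg, ← ContinuousLinearMap.comp_apply, hr,
      ContinuousLinearMap.id_apply]
  have := hs.norm_image_sub_sub_fderiv_apply_le hf hK hx hx'
  rwa [hlin, sub_neg_eq_add, sub_add_cancel, sub_sub_cancel_left, norm_neg] at this

theorem Convex.eq_zero_of_tendsto_newton (hs : Convex ℝ s)
    (hf : ∀ z ∈ s, HasFDerivAt f (f' z) z)
    (hK : ∀ u ∈ s, ∀ v ∈ s, ‖f' u - f' v‖ ≤ K * ‖u - v‖) {x : ℕ → X} {i : ℕ → Y →L[ℝ] X}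
    {a : X} (hxs : ∀ k, x k ∈ s) (ha : a ∈ s) (hr : ∀ k, (f' (x k)).comp (i k) = .id ℝ Y)
    (hstep : ∀ k, x (k + 1) = x k - i k (f (x k))) (hlim : Tendsto x atTop (𝓝 a)) :
    f a = 0 := by
  have hlim' : Tendsto (fun k => x (k + 1)) atTop (𝓝 a) := hlim.comp (tendsto_add_atTop_nat 1)
  have hres : ∀ k, ‖f (x (k + 1))‖ ≤ K / 2 * ‖x k - x (k + 1)‖ ^ 2 := fun k => by
    have := hs.norm_image_newton_step_le hf hK (hr k) (hxs k) (hstep k ▸ hxs (k + 1))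
    rwa [← hstep, ← sub_sub_cancel (x k) (i k (f (x k))), ← hstep] at this
  have hres_lim : Tendsto (fun k => K / 2 * ‖x k - x (k + 1)‖ ^ 2) atTop (𝓝 0) := by
    simpa using (((hlim.sub hlim').norm).pow 2).const_mul (K / 2)
  exact tendsto_nhds_unique ((hf a ha).continuousAt.tendsto.comp hlim')
    (squeeze_zero_norm hres hres_lim)

theorem Convex.exists_inverse_newton_step [CompleteSpace X] (hs : Convex ℝ s)
    (hf : ∀ z ∈ s, HasFDerivAt f (f' z) z) (hK0 : 0 ≤ K)
    (hK : ∀ u ∈ s, ∀ v ∈ s, ‖f' u - f' v‖ ≤ K * ‖u - v‖) {x : X} {i : Y →L[ℝ] X} {b e : ℝ}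
    (hl : i.comp (f' x) = .id ℝ X) (hr : (f' x).comp i = .id ℝ Y) (hb : ‖i‖ ≤ b)
    (he : ‖i (f x)‖ ≤ e) (hbKe : b * K * e < 1) (hx : x ∈ s) (hx' : x - i (f x) ∈ s) :
    ∃ i' : Y →L[ℝ] X, i'.comp (f' (x - i (f x))) = .id ℝ X ∧
      (f' (x - i (f x))).comp i' = .id ℝ Y ∧ ‖i'‖ ≤ b / (1 - b * K * e) ∧
      ‖i' (f (x - i (f x)))‖ ≤ K / 2 * (b / (1 - b * K * e)) * e ^ 2 := by
  set x' := x - i (f x)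
  have hb0 : 0 ≤ b := (norm_nonneg _).trans hb
  have hprod : ‖i‖ * ‖f' x - f' x'‖ ≤ b * K * e := by
    have : ‖f' x - f' x'‖ ≤ K * e := by
      calc ‖f' x - f' x'‖ ≤ K * ‖x - x'‖ := hK x hx x' hx'
        _ ≤ K * e := by rw [sub_sub_cancel]; gcongr
    rw [mul_assoc]
    gcongr
  obtain ⟨i', hl', hr', hi'⟩ :=
    ContinuousLinearMap.exists_inverse_of_norm_mul_norm_sub_lt hl hr (hprod.trans_lt hbKe)
  have hi'b : ‖i'‖ ≤ b / (1 - b * K * e) :=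
    hi'.trans (div_le_div₀ hb0 hb (by linarith) (by linarith))
  refine ⟨i', hl', hr', hi'b, ?_⟩
  calc ‖i' (f x')‖ ≤ ‖i'‖ * ‖f x'‖ := i'.le_opNorm _
    _ ≤ b / (1 - b * K * e) * (K / 2 * e ^ 2) := by
        gcongr
        exact (hs.norm_image_newton_step_le hf hK hr hx hx').trans (by gcongr)
    _ = K / 2 * (b / (1 - b * K * e)) * e ^ 2 := by ring

/-- `b` and `e` majorize `‖P'(x)⁻¹‖` and the Newton step `‖P'(x)⁻¹ P(x)‖`; the last field keeps
all later iterates in `closedBall x₀ (2 * η)`. -/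
structure KantorovichInvariant (P : X → Y) (P' : X → X →L[ℝ] Y) (x₀ : X) (K η : ℝ) (x : X)
    (i : Y →L[ℝ] X) (b e : ℝ) : Prop where
  inv_comp : i.comp (P' x) = .id ℝ X
  comp_inv : (P' x).comp i = .id ℝ Y
  norm_inv_le : ‖i‖ ≤ b
  norm_newton_step_le : ‖i (P x)‖ ≤ e
  mul_le_half : b * K * e ≤ 1 / 2
  norm_sub_add_le : ‖x - x₀‖ + 2 * e ≤ 2 * η

namespace KantorovichInvariant

variable {P : X → Y} {P' : X → X →L[ℝ] Y} {x₀ x : X} {η b e : ℝ} {i : Y →L[ℝ] X}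

theorem newton_step_bound_nonneg (h : KantorovichInvariant P P' x₀ K η x i b e) : 0 ≤ e :=
  (norm_nonneg _).trans h.norm_newton_step_le

theorem majorant_nonneg (hK0 : 0 ≤ K) (h : KantorovichInvariant P P' x₀ K η x i b e) :
    0 ≤ b * K * e :=
  mul_nonneg (mul_nonneg ((norm_nonneg _).trans h.norm_inv_le) hK0) h.newton_step_bound_nonneg

theorem mem_closedBall (h : KantorovichInvariant P P' x₀ K η x i b e) :
    x ∈ closedBall x₀ (2 * η) := by
  rw [mem_closedBall_iff_norm]
  linarith [h.norm_sub_add_le, h.newton_step_bound_nonneg]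

theorem norm_newton_step_sub_le (h : KantorovichInvariant P P' x₀ K η x i b e) :
    ‖x - i (P x) - x₀‖ ≤ ‖x - x₀‖ + e := by
  rw [sub_right_comm]
  exact (norm_sub_le _ _).trans (by linarith [h.norm_newton_step_le])

theorem exists_next [CompleteSpace X] (hK0 : 0 ≤ K)
    (hf : ∀ z ∈ closedBall x₀ (2 * η), HasFDerivAt P (P' z) z)
    (hK : ∀ u ∈ closedBall x₀ (2 * η), ∀ v ∈ closedBall x₀ (2 * η),
      ‖P' u - P' v‖ ≤ K * ‖u - v‖)
    (h : KantorovichInvariant P P' x₀ K η x i b e) :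
    ∃ i' b' e', KantorovichInvariant P P' x₀ K η (x - i (P x)) i' b' e' ∧
      e' ≤ b * K * e * e ∧ 2 * (b' * K * e') ≤ (2 * (b * K * e)) ^ 2 := by
  have hb0 : 0 ≤ b := (norm_nonneg _).trans h.norm_inv_le
  have he0 := h.newton_step_bound_nonneg
  have hx' : x - i (P x) ∈ closedBall x₀ (2 * η) := by
    rw [mem_closedBall_iff_norm]
    linarith [h.norm_newton_step_sub_le, h.norm_sub_add_le]
  obtain ⟨i', hl', hr', hb', he'⟩ := (convex_closedBall x₀ (2 * η)).exists_inverse_newton_step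
    hf hK0 hK h.inv_comp h.comp_inv h.norm_inv_le h.norm_newton_step_le
    (by linarith [h.mul_le_half]) h.mem_closedBall hx'
  have he_step := newton_majorant_step_le hb0 hK0 he0 h.mul_le_half
  have hs_step := newton_majorant_mul_le hb0 hK0 he0 h.mul_le_half
  refine ⟨i', _, _, ⟨hl', hr', hb', he', ?_, ?_⟩, he_step, hs_step⟩
  · nlinarith [h.mul_le_half, h.majorant_nonneg hK0]
  · nlinarith [h.norm_newton_step_sub_le, h.norm_sub_add_le, h.mul_le_half]

theorem exists_seq [CompleteSpace X] (hK0 : 0 ≤ K)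
    (hf : ∀ z ∈ closedBall x₀ (2 * η), HasFDerivAt P (P' z) z)
    (hK : ∀ u ∈ closedBall x₀ (2 * η), ∀ v ∈ closedBall x₀ (2 * η),
      ‖P' u - P' v‖ ≤ K * ‖u - v‖)
    (h₀ : KantorovichInvariant P P' x₀ K η x₀ i b e) :
    ∃ (x : ℕ → X) (inv : ℕ → Y →L[ℝ] X) (b' e' : ℕ → ℝ),
      x 0 = x₀ ∧ b' 0 = b ∧ e' 0 = e ∧
      (∀ k, KantorovichInvariant P P' x₀ K η (x k) (inv k) (b' k) (e' k)) ∧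
      (∀ k, x (k + 1) = x k - inv k (P (x k))) ∧
      (∀ k, e' (k + 1) ≤ b' k * K * e' k * e' k) ∧
      (∀ k, 2 * (b' (k + 1) * K * e' (k + 1)) ≤ (2 * (b' k * K * e' k)) ^ 2) := by
  obtain ⟨p, hp0, hp⟩ := exists_seq_of_forall_exists_step (a₀ := (x₀, i, b, e))
    (Q := fun p : X × (Y →L[ℝ] X) × ℝ × ℝ =>
      KantorovichInvariant P P' x₀ K η p.1 p.2.1 p.2.2.1 p.2.2.2)
    (R := fun p p' => p'.1 = p.1 - p.2.1 (P p.1) ∧ p'.2.2.2 ≤ p.2.2.1 * K * p.2.2.2 * p.2.2.2 ∧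
      2 * (p'.2.2.1 * K * p'.2.2.2) ≤ (2 * (p.2.2.1 * K * p.2.2.2)) ^ 2)
    (fun p hp => by
      obtain ⟨i', b', e', h', he', hs'⟩ := hp.exists_next hK0 hf hK
      exact ⟨(_, i', b', e'), h', rfl, he', hs'⟩)
    h₀
  exact ⟨fun k => (p k).1, fun k => (p k).2.1, fun k => (p k).2.2.1, fun k => (p k).2.2.2,
    by simp [hp0], by simp [hp0], by simp [hp0], fun k => (hp k).1, fun k => (hp k).2.1,
    fun k => (hp k).2.2.1, fun k => (hp k).2.2.2⟩

end KantorovichInvariant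

end Kantorovich

theorem kantorovich_newton_general
    {X Y : Type*} [NormedAddCommGroup X] [NormedSpace ℝ X] [CompleteSpace X]
    [NormedAddCommGroup Y] [NormedSpace ℝ Y]
    (P : X → Y) (P' : X → X →L[ℝ] Y)
    (D₀ : Set X)
    (x₀ : X)
    (hderiv : ∀ x ∈ D₀, HasFDerivAt P (P' x) x)
    (B K η h : ℝ)
    (inv₀ : Y →L[ℝ] X)
    (hinv₀l : inv₀.comp (P' x₀) = ContinuousLinearMap.id ℝ X)
    (hinv₀r : (P' x₀).comp inv₀ = ContinuousLinearMap.id ℝ Y)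
    (hB : ‖inv₀‖ ≤ B)
    (hη : ‖inv₀ (P x₀)‖ ≤ η)
    (hK : ∀ x ∈ D₀, ∀ y ∈ D₀, ‖P' x - P' y‖ ≤ K * ‖x - y‖)
    (hh : h = B * K * η) (hpos : 0 < h) (hhalf : h ≤ 1 / 2)
    (hball : Metric.closedBall x₀ (2 * η) ⊆ D₀) :
    ∃ (x : ℕ → X) (inv : ℕ → (Y →L[ℝ] X)),
      x 0 = x₀ ∧
      (∀ k, (inv k).comp (P' (x k)) = ContinuousLinearMap.id ℝ X ∧
            (P' (x k)).comp (inv k) = ContinuousLinearMap.id ℝ Y) ∧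
      (∀ k, x (k + 1) = x k - inv k (P (x k))) ∧
      (∀ k, ‖x k - x₀‖ ≤ 2 * η) ∧
      ∃ xs : X, ‖xs - x₀‖ ≤ 2 * η ∧ P xs = 0 ∧
        Tendsto x atTop (nhds xs) ∧
        ∀ k, ‖xs - x k‖ ≤ η / h * (2 * h) ^ (2 ^ k) / ((2 : ℝ) ^ k) := by
  have hB0 : 0 ≤ B := (norm_nonneg _).trans hB
  have hη0 : 0 ≤ η := (norm_nonneg _).trans hη
  have hK0 : 0 ≤ K := by by_contra! hK0; nlinarith [mul_nonneg hB0 hη0]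
  have hf : ∀ z ∈ closedBall x₀ (2 * η), HasFDerivAt P (P' z) z := fun z hz => hderiv z (hball hz)
  have hL : ∀ u ∈ closedBall x₀ (2 * η), ∀ v ∈ closedBall x₀ (2 * η),
      ‖P' u - P' v‖ ≤ K * ‖u - v‖ := fun u hu v hv => hK u (hball hu) v (hball hv)
  obtain ⟨x, inv, b, e, hx0, hbB, heη, hinv, hstep, he_succ, hq_succ⟩ :=
    KantorovichInvariant.exists_seq hK0 hf hL ⟨hinv₀l, hinv₀r, hB, hη, hh ▸ hhalf, by simp⟩
  have he_bound : ∀ k, e k ≤ η / (2 * h) * (2 * h) ^ 2 ^ k / 2 ^ k := by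
    simpa [hbB, heη, ← hh] using le_div_mul_pow_two_pow_of_le_sq (q := fun k => 2 * (b k * K * e k))
      (fun k => by linarith [(hinv k).majorant_nonneg hK0]) hq_succ (by simp [hbB, heη, ← hh, hpos])
      (fun k => (hinv k).newton_step_bound_nonneg)
      (fun k => (he_succ k).trans_eq (by ring))
  obtain ⟨xs, hlim, hdist⟩ := exists_tendsto_dist_le_two_mul_of_dist_succ_le (x := x) (e := e)
    (fun k => by rw [dist_eq_norm, hstep k, sub_sub_cancel]; exact (hinv k).norm_newton_step_le)
    (fun k => (he_succ k).trans <| by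
      nlinarith [(hinv k).mul_le_half, (hinv k).newton_step_bound_nonneg])
  have hxs : ‖xs - x₀‖ ≤ 2 * η := by simpa [dist_eq_norm', hx0, heη] using hdist 0
  refine ⟨x, inv, hx0, fun k => ⟨(hinv k).inv_comp, (hinv k).comp_inv⟩, hstep,
    fun k => mem_closedBall_iff_norm.1 (hinv k).mem_closedBall, xs, hxs,
    (convex_closedBall x₀ (2 * η)).eq_zero_of_tendsto_newton hf hL
      (fun k => (hinv k).mem_closedBall) (mem_closedBall_iff_norm.2 hxs)
      (fun k => (hinv k).comp_inv) hstep hlim, hlim, fun k => ?_⟩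
  calc ‖xs - x k‖ = dist (x k) xs := (dist_eq_norm' _ _).symm
    _ ≤ 2 * e k := hdist k
    _ ≤ 2 * (η / (2 * h) * (2 * h) ^ 2 ^ k / 2 ^ k) := by gcongr; exact he_bound k
    _ = η / h * (2 * h) ^ 2 ^ k / 2 ^ k := by ring

/-- Kantorovich's theorem on Newton's method: under the classical hypotheses,
the Newton iterates are well defined (each derivative along the iterates has a
bounded linear inverse), remain in the closed ball of radius `2η` around `x₀`,
and converge to a zero `x*` of `P` in that ball, with the quadratic-convergence
error bound `‖x* − x_k‖ ≤ (η/h)·(2h)^(2^k)/2^k`. -/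
theorem kantorovich_newton
    {X Y : Type*} [NormedAddCommGroup X] [NormedSpace ℝ X] [CompleteSpace X]
    [NormedAddCommGroup Y] [NormedSpace ℝ Y] [CompleteSpace Y]
    (P : X → Y) (P' : X → X →L[ℝ] Y)
    (D₀ : Set X) (hD₀open : IsOpen D₀) (hD₀conv : Convex ℝ D₀)
    (x₀ : X) (hx₀ : x₀ ∈ D₀)
    (hderiv : ∀ x ∈ D₀, HasFDerivAt P (P' x) x)
    (B K η h : ℝ)
    (inv₀ : Y →L[ℝ] X)
    (hinv₀l : inv₀.comp (P' x₀) = ContinuousLinearMap.id ℝ X)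
    (hinv₀r : (P' x₀).comp inv₀ = ContinuousLinearMap.id ℝ Y)
    (hB : ‖inv₀‖ ≤ B)
    (hη : ‖inv₀ (P x₀)‖ ≤ η)
    (hK : ∀ x ∈ D₀, ∀ y ∈ D₀, ‖P' x - P' y‖ ≤ K * ‖x - y‖)
    (hh : h = B * K * η) (hpos : 0 < h) (hhalf : h ≤ 1 / 2)
    (hball : Metric.closedBall x₀ (2 * η) ⊆ D₀) :
    ∃ (x : ℕ → X) (inv : ℕ → (Y →L[ℝ] X)),
      x 0 = x₀ ∧
      (∀ k, (inv k).comp (P' (x k)) = ContinuousLinearMap.id ℝ X ∧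
            (P' (x k)).comp (inv k) = ContinuousLinearMap.id ℝ Y) ∧
      (∀ k, x (k + 1) = x k - inv k (P (x k))) ∧
      (∀ k, ‖x k - x₀‖ ≤ 2 * η) ∧
      ∃ xs : X, ‖xs - x₀‖ ≤ 2 * η ∧ P xs = 0 ∧
        Tendsto x atTop (nhds xs) ∧
        ∀ k, ‖xs - x k‖ ≤ η / h * (2 * h) ^ (2 ^ k) / ((2 : ℝ) ^ k) :=
  kantorovich_newton_general P P' D₀ x₀ hderiv B K η h inv₀ hinv₀l hinv₀r hB hη hK hh hpos hhalf
    hball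
end

section
/- Under the stated hypotheses (Kantorovich), there exists a point x* with P(x*) = 0 such that ‖x* − x₀‖ ≤ 2η and, with x₁ = x₀ − [P'(x₀)]⁻¹ P(x₀) denoting the first Newton iterate, ‖x* − x₁‖ ≤ 2 η h. -/
/-!
Kantorovich's argument with the simplified Newton map `T z = z - Γ (P z)`, `Γ = P'(x₀)⁻¹`.
Since `T'(z) = Γ (P'(x₀) - P'(z))` has norm at most `c ‖z - x₀‖` with `c = B K`, integrating
along segments gives `‖T y - T x‖ ≤ c (‖x - x₀‖ + ‖y - x₀‖) / 2 · ‖y - x‖`. With this estimate the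
steps of the iteration `xₙ₊₁ = T xₙ` are dominated by those of the scalar iteration
`tₙ₊₁ = η + c tₙ² / 2`, `t₀ = 0`, which stays below `2η` when `h = c η ≤ 1/2`; the iterates
therefore converge to a fixed point `x*` of `T`, i.e. a zero of `P`, in the ball of radius `2η`.
Finally `x* - x₁ = T x* - T x₀` has norm at most `c (2η)² / 2 = 2ηh`.
-/

open Set Metric Filter Topology Function

theorem norm_image_sub_le_of_norm_hasFDerivWithin_le_mul_norm_sub
    {E F : Type*} [NormedAddCommGroup E] [NormedSpace ℝ E]
    [NormedAddCommGroup F] [NormedSpace ℝ F]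
    {f : E → F} {f' : E → E →L[ℝ] F} {s : Set E} {a x y : E} {L : ℝ}
    (hf : ∀ z ∈ s, HasFDerivWithinAt f (f' z) s z) (bound : ∀ z ∈ s, ‖f' z‖ ≤ L * ‖z - a‖)
    (hL : 0 ≤ L) (hs : Convex ℝ s) (xs : x ∈ s) (ys : y ∈ s) :
    ‖f y - f x‖ ≤ L * ((‖x - a‖ + ‖y - a‖) / 2) * ‖y - x‖ := by
  set g := (AffineMap.lineMap x y : ℝ → E)
  set α := ‖x - a‖
  set β := ‖y - a‖
  set d := ‖y - x‖
  have segm : MapsTo g (Icc 0 1) s := hs.mapsTo_lineMap xs ys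
  have hD : ∀ t ∈ Icc (0 : ℝ) 1,
      HasDerivWithinAt (fun t => f (g t) - f x) (f' (g t) (y - x)) (Icc 0 1) t := fun t ht => by
    simpa using ((hf (g t) (segm ht)).comp_hasDerivWithinAt _
      AffineMap.hasDerivWithinAt_lineMap segm).sub_const (f x)
  have dist_g : ∀ t ∈ Icc (0 : ℝ) 1, ‖g t - a‖ ≤ (1 - t) * α + t * β := fun t ht => by
    have : g t - a = (1 - t) • (x - a) + t • (y - a) := by
      simp only [g, AffineMap.lineMap_apply_module]; module
    rw [this]
    refine (norm_add_le _ _).trans_eq ?_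
    rw [norm_smul, norm_smul, Real.norm_of_nonneg (sub_nonneg.2 ht.2), Real.norm_of_nonneg ht.1]
  have bound' : ∀ t ∈ Ico (0 : ℝ) 1, ‖f' (g t) (y - x)‖ ≤ L * d * α + L * d * (β - α) * t :=
    fun t ht => calc
      ‖f' (g t) (y - x)‖ ≤ ‖f' (g t)‖ * d := (f' (g t)).le_opNorm _
      _ ≤ L * ((1 - t) * α + t * β) * d := by
        gcongr
        exact (bound _ (segm (Ico_subset_Icc_self ht))).trans
          (mul_le_mul_of_nonneg_left (dist_g t (Ico_subset_Icc_self ht)) hL)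
      _ = L * d * α + L * d * (β - α) * t := by ring
  have hB : ∀ t : ℝ, HasDerivAt (fun t => L * d * α * t + L * d * (β - α) / 2 * t ^ 2)
      (L * d * α + L * d * (β - α) * t) t := fun t =>
    ((hasDerivAt_id' t).const_mul (L * d * α) |>.add
      ((hasDerivAt_pow 2 t).const_mul (L * d * (β - α) / 2))).congr_deriv (by norm_num; ring)
  have := image_norm_le_of_norm_deriv_right_le_deriv_boundary
    (fun t ht => (hD t ht).continuousWithinAt)
    (fun t ht => (hD t (Ico_subset_Icc_self ht)).mono_of_mem_nhdsWithin
      (Icc_mem_nhdsGE_of_mem ht)) (by simp [g]) hB bound' (right_mem_Icc.2 zero_le_one)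
  simp only [g, AffineMap.lineMap_apply_one] at this
  linarith

noncomputable def kantorovichMajorant (η c : ℝ) : ℕ → ℝ
  | 0 => 0
  | n + 1 => η + c * kantorovichMajorant η c n ^ 2 / 2

section Majorant

variable {η c r : ℝ}

theorem kantorovichMajorant_nonneg (hη : 0 ≤ η) (hc : 0 ≤ c) :
    ∀ n, 0 ≤ kantorovichMajorant η c n
  | 0 => le_rfl
  | n + 1 => by rw [kantorovichMajorant]; positivity

theorem kantorovichMajorant_le (hη : 0 ≤ η) (hc : 0 ≤ c) (hr : η + c * r ^ 2 / 2 ≤ r) :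
    ∀ n, kantorovichMajorant η c n ≤ r
  | 0 => (by positivity : 0 ≤ η + c * r ^ 2 / 2).trans hr
  | n + 1 => by
    have := kantorovichMajorant_nonneg hη hc n
    have := kantorovichMajorant_le hη hc hr n
    rw [kantorovichMajorant]
    refine le_trans ?_ hr
    gcongr

end Majorant

section FixedPoint

variable {X : Type*} [NormedAddCommGroup X] {T : X → X} {x₀ : X} {η c r : ℝ}

theorem norm_iterate_sub_le_kantorovichMajorant (hc : 0 ≤ c) (hr : η + c * r ^ 2 / 2 ≤ r)
    (hT₀ : ‖T x₀ - x₀‖ ≤ η)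
    (hT : ∀ x ∈ closedBall x₀ r, ∀ y ∈ closedBall x₀ r,
      ‖T y - T x‖ ≤ c * ((‖x - x₀‖ + ‖y - x₀‖) / 2) * ‖y - x‖) (n : ℕ) :
    ‖T^[n + 1] x₀ - T^[n] x₀‖ ≤ kantorovichMajorant η c (n + 1) - kantorovichMajorant η c n ∧
      ‖T^[n] x₀ - x₀‖ ≤ kantorovichMajorant η c n := by
  set t := kantorovichMajorant η c
  have hη : 0 ≤ η := (norm_nonneg _).trans hT₀
  induction n with
  | zero => simpa [t, kantorovichMajorant] using hT₀
  | succ n ih =>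
    obtain ⟨hstep, hdist⟩ := ih
    have hdist' : ‖T^[n + 1] x₀ - x₀‖ ≤ t (n + 1) := by
      linarith [norm_sub_le_norm_sub_add_norm_sub (T^[n + 1] x₀) (T^[n] x₀) x₀]
    have mem : ∀ m, ‖T^[m] x₀ - x₀‖ ≤ t m → T^[m] x₀ ∈ closedBall x₀ r := fun m hm =>
      mem_closedBall_iff_norm.2 (hm.trans (kantorovichMajorant_le hη hc hr m))
    refine ⟨?_, hdist'⟩
    have ht := kantorovichMajorant_nonneg hη hc
    calc ‖T^[n + 1 + 1] x₀ - T^[n + 1] x₀‖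
        = ‖T (T^[n + 1] x₀) - T (T^[n] x₀)‖ := by
          rw [iterate_succ_apply', iterate_succ_apply']
      _ ≤ c * ((‖T^[n] x₀ - x₀‖ + ‖T^[n + 1] x₀ - x₀‖) / 2) * ‖T^[n + 1] x₀ - T^[n] x₀‖ :=
          hT _ (mem n hdist) _ (mem (n + 1) hdist')
      _ ≤ c * ((t n + t (n + 1)) / 2) * (t (n + 1) - t n) := by
          gcongr
          exact mul_nonneg hc (by linarith [ht n, ht (n + 1)])
      _ = t (n + 1 + 1) - t (n + 1) := by simp only [t, kantorovichMajorant]; ring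

theorem exists_mem_closedBall_isFixedPt_of_kantorovich [CompleteSpace X] (hc : 0 ≤ c)
    (hr : η + c * r ^ 2 / 2 ≤ r) (hT₀ : ‖T x₀ - x₀‖ ≤ η)
    (hT : ∀ x ∈ closedBall x₀ r, ∀ y ∈ closedBall x₀ r,
      ‖T y - T x‖ ≤ c * ((‖x - x₀‖ + ‖y - x₀‖) / 2) * ‖y - x‖) :
    ∃ xs ∈ closedBall x₀ r, IsFixedPt T xs := by
  set t := kantorovichMajorant η c
  have hη : 0 ≤ η := (norm_nonneg _).trans hT₀
  have hiter := norm_iterate_sub_le_kantorovichMajorant hc hr hT₀ hT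
  have mem : ∀ n, T^[n] x₀ ∈ closedBall x₀ r := fun n =>
    mem_closedBall_iff_norm.2 ((hiter n).2.trans (kantorovichMajorant_le hη hc hr n))
  have summable : Summable fun n => t (n + 1) - t n := by
    refine summable_of_sum_range_le (c := r) (fun n => (norm_nonneg _).trans (hiter n).1) fun n => ?_
    rw [Finset.sum_range_sub (f := t)]
    simpa [t, kantorovichMajorant] using kantorovichMajorant_le hη hc hr n
  have cauchy : CauchySeq fun n => T^[n] x₀ :=
    cauchySeq_of_dist_le_of_summable _ (fun n => by rw [dist_comm, dist_eq_norm]; exact (hiter n).1)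
      summable
  obtain ⟨xs, hlim⟩ := cauchySeq_tendsto_of_complete cauchy
  have hxs : xs ∈ closedBall x₀ r := isClosed_closedBall.mem_of_tendsto hlim (.of_forall mem)
  -- on the ball, `hT` makes `T` Lipschitz with constant `c * r`
  have hlim_T : Tendsto (fun n => T (T^[n] x₀)) atTop (𝓝 (T xs)) := by
    rw [tendsto_iff_norm_sub_tendsto_zero] at hlim ⊢
    refine squeeze_zero (fun _ => norm_nonneg _) (fun n => ?_) (by simpa using hlim.const_mul (c * r))
    refine (hT _ hxs _ (mem n)).trans ?_
    have := mem_closedBall_iff_norm.1 hxs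
    have := mem_closedBall_iff_norm.1 (mem n)
    gcongr
    linarith
  refine ⟨xs, hxs, tendsto_nhds_unique hlim_T ?_⟩
  simpa only [← iterate_succ_apply'] using (tendsto_add_atTop_iff_nat 1).2 hlim

end FixedPoint

theorem hasFDerivWithinAt_sub_comp_of_comp_eq_id
    {X Y : Type*} [NormedAddCommGroup X] [NormedSpace ℝ X] [NormedAddCommGroup Y] [NormedSpace ℝ Y]
    {P : X → Y} {P' : X → X →L[ℝ] Y} {Γ : Y →L[ℝ] X} {s : Set X} {x₀ x : X}
    (hΓ : Γ.comp (P' x₀) = ContinuousLinearMap.id ℝ X) (hP : HasFDerivWithinAt P (P' x) s x) :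
    HasFDerivWithinAt (fun z => z - Γ (P z)) (Γ.comp (P' x₀ - P' x)) s x := by
  rw [ContinuousLinearMap.comp_sub, hΓ]
  exact (hasFDerivWithinAt_id x s).sub (Γ.hasFDerivAt.comp_hasFDerivWithinAt x hP)

theorem norm_sub_inverse_comp_sub_le
    {X Y : Type*} [NormedAddCommGroup X] [NormedSpace ℝ X] [NormedAddCommGroup Y] [NormedSpace ℝ Y]
    {P : X → Y} {P' : X → X →L[ℝ] Y} {Γ : Y →L[ℝ] X} {s : Set X} {x₀ x y : X} {B K : ℝ}
    (hs : Convex ℝ s) (hP : ∀ z ∈ s, HasFDerivWithinAt P (P' z) s z)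
    (hΓ : Γ.comp (P' x₀) = ContinuousLinearMap.id ℝ X) (hB : ‖Γ‖ ≤ B)
    (hK : ∀ z ∈ s, ‖P' z - P' x₀‖ ≤ K * ‖z - x₀‖) (hK₀ : 0 ≤ K) (xs : x ∈ s) (ys : y ∈ s) :
    ‖(y - Γ (P y)) - (x - Γ (P x))‖ ≤ B * K * ((‖x - x₀‖ + ‖y - x₀‖) / 2) * ‖y - x‖ := by
  have hB₀ : 0 ≤ B := (norm_nonneg _).trans hB
  refine norm_image_sub_le_of_norm_hasFDerivWithin_le_mul_norm_sub
    (fun z hz => hasFDerivWithinAt_sub_comp_of_comp_eq_id hΓ (hP z hz))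
    (fun z hz => ?_) (mul_nonneg hB₀ hK₀) hs xs ys
  calc ‖Γ.comp (P' x₀ - P' z)‖ ≤ B * (K * ‖z - x₀‖) :=
        (Γ.opNorm_comp_le _).trans <| mul_le_mul hB (by rw [norm_sub_rev]; exact hK z hz)
          (norm_nonneg _) hB₀
    _ = B * K * ‖z - x₀‖ := (mul_assoc _ _ _).symm

theorem kantorovich_first_iterate_general
    {X Y : Type*} [NormedAddCommGroup X] [NormedSpace ℝ X] [CompleteSpace X]
    [NormedAddCommGroup Y] [NormedSpace ℝ Y]
    (P : X → Y) (P' : X → X →L[ℝ] Y)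
    (D₀ : Set X)
    (x₀ : X)
    (hderiv : ∀ x ∈ D₀, HasFDerivAt P (P' x) x)
    (B K η h : ℝ)
    (inv₀ : Y →L[ℝ] X)
    (hinv₀l : inv₀.comp (P' x₀) = ContinuousLinearMap.id ℝ X)
    (hinv₀r : (P' x₀).comp inv₀ = ContinuousLinearMap.id ℝ Y)
    (hB : ‖inv₀‖ ≤ B)
    (hη : ‖inv₀ (P x₀)‖ ≤ η)
    (hK : ∀ x ∈ D₀, ∀ y ∈ D₀, ‖P' x - P' y‖ ≤ K * ‖x - y‖)
    (hh : h = B * K * η) (hpos : 0 < h) (hhalf : h ≤ 1 / 2)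
    (hball : Metric.closedBall x₀ (2 * η) ⊆ D₀) :
    ∃ xs : X, P xs = 0 ∧ ‖xs - x₀‖ ≤ 2 * η ∧
      ‖xs - (x₀ - inv₀ (P x₀))‖ ≤ 2 * η * h := by
  subst hh
  have hη₀ : 0 ≤ η := (norm_nonneg _).trans hη
  have hc : 0 < B * K := pos_of_mul_pos_left hpos hη₀
  have hK₀ : 0 ≤ K := (pos_of_mul_pos_right hc ((norm_nonneg _).trans hB)).le
  have hx₀ : x₀ ∈ closedBall x₀ (2 * η) := mem_closedBall_self (by positivity)
  have hT : ∀ x ∈ closedBall x₀ (2 * η), ∀ y ∈ closedBall x₀ (2 * η),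
      ‖(y - inv₀ (P y)) - (x - inv₀ (P x))‖ ≤
        B * K * ((‖x - x₀‖ + ‖y - x₀‖) / 2) * ‖y - x‖ := fun x hx y hy =>
    norm_sub_inverse_comp_sub_le (convex_closedBall _ _)
      (fun z hz => (hderiv z (hball hz)).hasFDerivWithinAt) hinv₀l hB
      (fun z hz => hK z (hball hz) x₀ (hball hx₀)) hK₀ hx hy
  obtain ⟨xs, hxs, hfix⟩ := exists_mem_closedBall_isFixedPt_of_kantorovich (η := η) hc.le
    (by nlinarith [mul_le_mul_of_nonneg_left hhalf hη₀]) (by simpa using hη) hT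
  replace hfix : xs - inv₀ (P xs) = xs := hfix
  have hxs₀ : ‖xs - x₀‖ ≤ 2 * η := mem_closedBall_iff_norm.1 hxs
  refine ⟨xs, ?_, hxs₀, ?_⟩
  · calc P xs = P' x₀ (inv₀ (P xs)) := by rw [← ContinuousLinearMap.comp_apply, hinv₀r]; rfl
      _ = 0 := by rw [sub_eq_self.1 hfix, map_zero]
  · calc ‖xs - (x₀ - inv₀ (P x₀))‖ = ‖(xs - inv₀ (P xs)) - (x₀ - inv₀ (P x₀))‖ := by rw [hfix]
      _ ≤ B * K * ((0 + ‖xs - x₀‖) / 2) * ‖xs - x₀‖ := by simpa using hT _ hx₀ _ hxs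
      _ ≤ B * K * ((0 + 2 * η) / 2) * (2 * η) := by gcongr
      _ = 2 * η * (B * K * η) := by ring

/-- Under the Kantorovich hypotheses, there is a zero `x*` of `P` in the
closed ball of radius `2η` around `x₀`, and `x*` lies within distance `2ηh`
of the first Newton iterate `x₁ = x₀ − [P'(x₀)]⁻¹ P(x₀)`. -/
theorem kantorovich_first_iterate
    {X Y : Type*} [NormedAddCommGroup X] [NormedSpace ℝ X] [CompleteSpace X]
    [NormedAddCommGroup Y] [NormedSpace ℝ Y] [CompleteSpace Y]
    (P : X → Y) (P' : X → X →L[ℝ] Y)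
    (D₀ : Set X) (hD₀open : IsOpen D₀) (hD₀conv : Convex ℝ D₀)
    (x₀ : X) (hx₀ : x₀ ∈ D₀)
    (hderiv : ∀ x ∈ D₀, HasFDerivAt P (P' x) x)
    (B K η h : ℝ)
    (inv₀ : Y →L[ℝ] X)
    (hinv₀l : inv₀.comp (P' x₀) = ContinuousLinearMap.id ℝ X)
    (hinv₀r : (P' x₀).comp inv₀ = ContinuousLinearMap.id ℝ Y)
    (hB : ‖inv₀‖ ≤ B)
    (hη : ‖inv₀ (P x₀)‖ ≤ η)
    (hK : ∀ x ∈ D₀, ∀ y ∈ D₀, ‖P' x - P' y‖ ≤ K * ‖x - y‖)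
    (hh : h = B * K * η) (hpos : 0 < h) (hhalf : h ≤ 1 / 2)
    (hball : Metric.closedBall x₀ (2 * η) ⊆ D₀) :
    ∃ xs : X, P xs = 0 ∧ ‖xs - x₀‖ ≤ 2 * η ∧
      ‖xs - (x₀ - inv₀ (P x₀))‖ ≤ 2 * η * h :=
  kantorovich_first_iterate_general P P' D₀ x₀ hderiv B K η h inv₀ hinv₀l hinv₀r hB hη hK hh hpos
    hhalf hball
end

section
/- If ‖x(j)‖ ≤ K for every j ∈ J, then the normalized weights π(β,j) = w(β,j) / W(β) satisfy Σ_{j∈J} π(β,j)² ≤ exp(4 K ‖β‖) / |J| for every β ∈ ℝ^p. -/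
/-! With `a = K‖β‖`, every exponent `⟪β, x j⟫` lies in `[-a, a]`, so each weight is at most
`exp a / (|J| exp (-a)) = exp (2a) / |J|`; summing the squares of `|J|` such weights gives the bound. -/

open scoped RealInnerProductSpace BigOperators

open Finset Real

theorem abs_inner_le_mul_norm_of_norm_le {E : Type*} [NormedAddCommGroup E] [InnerProductSpace ℝ E]
    {K : ℝ} {v : E} (hv : ‖v‖ ≤ K) (β : E) : |⟪β, v⟫| ≤ K * ‖β‖ :=
  calc |⟪β, v⟫| ≤ ‖β‖ * ‖v‖ := abs_real_inner_le_norm β v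
    _ ≤ ‖β‖ * K := mul_le_mul_of_nonneg_left hv (norm_nonneg β)
    _ = K * ‖β‖ := mul_comm _ _

section SoftmaxBounds

variable {ι : Type*} [Fintype ι] {f : ι → ℝ} {a : ℝ}

theorem card_mul_exp_neg_le_sum_exp (hf : ∀ j, |f j| ≤ a) :
    (Fintype.card ι : ℝ) * exp (-a) ≤ ∑ j, exp (f j) := by
  simpa [nsmul_eq_mul] using card_nsmul_le_sum univ (fun j ↦ exp (f j)) (exp (-a))
    fun j _ ↦ exp_le_exp.2 (neg_le_of_abs_le (hf j))

theorem exp_div_sum_exp_le (hf : ∀ j, |f j| ≤ a) (i : ι) :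
    exp (f i) / ∑ j, exp (f j) ≤ exp (2 * a) / Fintype.card ι := by
  have : Nonempty ι := ⟨i⟩
  calc exp (f i) / ∑ j, exp (f j)
      ≤ exp a / (Fintype.card ι * exp (-a)) :=
        div_le_div₀ (exp_pos a).le (exp_le_exp.2 (le_of_abs_le (hf i)))
          (by positivity) (card_mul_exp_neg_le_sum_exp hf)
    _ = exp (2 * a) / Fintype.card ι := by
        rw [div_mul_eq_div_div, div_right_comm, ← exp_sub]
        ring_nf

theorem sum_sq_exp_div_sum_exp_le (hf : ∀ j, |f j| ≤ a) :
    ∑ i, (exp (f i) / ∑ j, exp (f j)) ^ 2 ≤ exp (4 * a) / Fintype.card ι := by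
  rcases isEmpty_or_nonempty ι with _ | _
  · simp
  have hS : 0 < ∑ j, exp (f j) := sum_pos (fun j _ ↦ exp_pos (f j)) univ_nonempty
  calc ∑ i, (exp (f i) / ∑ j, exp (f j)) ^ 2
      ≤ ∑ _i : ι, (exp (2 * a) / Fintype.card ι) ^ 2 :=
        sum_le_sum fun i _ ↦
          pow_le_pow_left₀ (div_pos (exp_pos _) hS).le (exp_div_sum_exp_le hf i) 2
    _ = exp (4 * a) / Fintype.card ι := by
        rw [sum_const, card_univ, nsmul_eq_mul, div_pow, ← exp_nat_mul]
        field_simp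
        ring_nf

end SoftmaxBounds

theorem sum_sq_normalized_weights_le_general
    {p : ℕ} {J : Type*} [Fintype J]
    (K : ℝ)
    (x : J → EuclideanSpace ℝ (Fin p)) (hx : ∀ j, ‖x j‖ ≤ K)
    (β : EuclideanSpace ℝ (Fin p)) :
    ∑ j, (Real.exp ⟪β, x j⟫ / ∑ j', Real.exp ⟪β, x j'⟫) ^ 2
      ≤ Real.exp (4 * K * ‖β‖) / (Fintype.card J : ℝ) := by
  rw [mul_assoc]
  exact sum_sq_exp_div_sum_exp_le fun j ↦ abs_inner_le_mul_norm_of_norm_le (hx j) β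

/-- If `‖x j‖ ≤ K` for all `j`, then the normalized weights
`π(β,j) = exp⟪β, x j⟫ / Σ_{j'} exp⟪β, x j'⟫` satisfy
`Σ_j π(β,j)² ≤ exp(4K‖β‖)/|J|`. -/
theorem sum_sq_normalized_weights_le
    {p : ℕ} {J : Type*} [Fintype J] [Nonempty J]
    (K : ℝ) (hK : 0 ≤ K)
    (x : J → EuclideanSpace ℝ (Fin p)) (hx : ∀ j, ‖x j‖ ≤ K)
    (β : EuclideanSpace ℝ (Fin p)) :
    ∑ j, (Real.exp ⟪β, x j⟫ / ∑ j', Real.exp ⟪β, x j'⟫) ^ 2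
      ≤ Real.exp (4 * K * ‖β‖) / (Fintype.card J : ℝ) :=
  sum_sq_normalized_weights_le_general K x hx β
end

section
/- Suppose ‖x(j)‖ ≤ K for every j ∈ J, and let π(β,·) be the probability mass function on J with π(β,j) = w(β,j)/W(β). Then, under the product measure π(β,·)^{⊗L} on J^L (modeling L independent and identically distributed draws j̃_1, …, j̃_L), the probability that the coordinates are not pairwise distinct is at most binom(L,2) · exp(4 K ‖β‖) / |J|. -/
open scoped RealInnerProductSpace BigOperators

open Finset Function

/-!
Write `q j = w(β,j) / W(β)`. Since `|⟪β, x j⟫| ≤ K‖β‖`, every weight lies in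
`[exp (-K‖β‖), exp (K‖β‖)]`, so `q j ≤ exp (2K‖β‖) / |J|`. A tuple that is not injective
has a collision `v a = v b` for some unordered pair `{a, b}` of distinct indices, and the
mass of such a collision is `∑ j, q j ^ 2 ≤ max q`; a union bound over the `binom(L,2)`
pairs concludes.
-/

theorem sum_le_sum_sum_filter_of_forall_exists {α ι R : Type*}
    [AddCommMonoid R] [PartialOrder R] [IsOrderedAddMonoid R]
    {s : Finset α} {t : Finset ι} {f : α → R} (hf : ∀ a ∈ s, 0 ≤ f a)
    (p : ι → α → Prop) [∀ i, DecidablePred (p i)] (h : ∀ a ∈ s, ∃ i ∈ t, p i a) :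
    ∑ a ∈ s, f a ≤ ∑ i ∈ t, ∑ a ∈ s.filter (p i), f a := by
  calc ∑ a ∈ s, f a ≤ ∑ a ∈ s, ∑ i ∈ t.filter (p · a), f a := by
        refine sum_le_sum fun a ha => ?_
        obtain ⟨i, hi, hpi⟩ := h a ha
        exact single_le_sum (f := fun _ => f a) (fun _ _ => hf a ha) (mem_filter.2 ⟨hi, hpi⟩)
    _ = ∑ i ∈ t, ∑ a ∈ s.filter (p i), f a := by
        simp only [sum_filter]
        exact sum_comm

theorem sum_prod_filter_apply_eq_apply {ι J R : Type*} [Fintype ι] [DecidableEq ι]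
    [Fintype J] [DecidableEq J] [CommSemiring R] (q : J → R) {a b : ι} (hab : a ≠ b) :
    ∑ v ∈ univ.filter (fun v : ι → J => v a = v b), ∏ i, q (v i)
      = (∑ j, q j ^ 2) * (∑ j, q j) ^ (Fintype.card ι - 2) := by
  -- the tuples with `v a = v b = j` form a box, whose mass factorises
  let t : J → ι → Finset J := fun j i => if i = a ∨ i = b then {j} else univ
  have hfiber : ∀ j, (univ.filter (fun v : ι → J => v a = v b)).filter (fun v => v a = j)
      = Fintype.piFinset (t j) := by
    intro j
    ext v
    simp only [mem_filter, mem_univ, true_and, Fintype.mem_piFinset, t]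
    constructor
    · rintro ⟨hv, rfl⟩ i
      split_ifs with hi
      · rcases hi with rfl | rfl <;> simp [hv]
      · exact mem_univ _
    · intro h
      have ha := h a
      have hb := h b
      simp only [true_or, or_true, if_true, mem_singleton] at ha hb
      exact ⟨ha.trans hb.symm, ha⟩
  have hpair : (univ.filter fun i : ι => i = a ∨ i = b) = {a, b} := by ext; simp
  rw [← sum_fiberwise_of_maps_to (g := fun v : ι → J => v a) (fun v _ => mem_univ _), sum_mul]
  refine sum_congr rfl fun j _ => ?_
  rw [hfiber, ← prod_univ_sum]
  simp only [t, apply_ite (fun s : Finset J => ∑ k ∈ s, q k), sum_singleton]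
  rw [prod_ite, prod_const, prod_const, filter_not, hpair, card_univ_sdiff, card_pair hab]

theorem sum_prod_filter_apply_eq_apply_le {ι J : Type*} [Fintype ι] [DecidableEq ι]
    [Fintype J] [DecidableEq J] {q : J → ℝ} (hq0 : ∀ j, 0 ≤ q j) (hq1 : ∑ j, q j = 1)
    {C : ℝ} (hqC : ∀ j, q j ≤ C) {a b : ι} (hab : a ≠ b) :
    ∑ v ∈ univ.filter (fun v : ι → J => v a = v b), ∏ i, q (v i) ≤ C := by
  rw [sum_prod_filter_apply_eq_apply q hab, hq1, one_pow, mul_one]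
  calc ∑ j, q j ^ 2 ≤ ∑ j, C * q j := sum_le_sum fun j _ => by
        rw [sq]; exact mul_le_mul_of_nonneg_right (hqC j) (hq0 j)
    _ = C := by rw [← mul_sum, hq1, mul_one]

theorem sum_prod_filter_not_injective_le {ι J : Type*} [Fintype ι] [DecidableEq ι]
    [Fintype J] [DecidableEq J] {q : J → ℝ} (hq0 : ∀ j, 0 ≤ q j) (hq1 : ∑ j, q j = 1)
    {C : ℝ} (hqC : ∀ j, q j ≤ C) :
    ∑ v ∈ univ.filter (fun v : ι → J => ¬ Injective v), ∏ i, q (v i)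
      ≤ (Fintype.card ι).choose 2 * C := by
  have hcover : ∀ v ∈ univ.filter (fun v : ι → J => ¬ Injective v),
      ∃ e ∈ (univ : Finset {z : Sym2 ι // ¬ z.IsDiag}), (e.1.map v).IsDiag := by
    intro v hv
    obtain ⟨a, b, hvab, hab⟩ := not_injective_iff.1 (mem_filter.1 hv).2
    exact ⟨⟨s(a, b), Sym2.mk_isDiag_iff.not.2 hab⟩, mem_univ _, by
      simpa [Sym2.map_mk] using hvab⟩
  calc _ ≤ ∑ e : {z : Sym2 ι // ¬ z.IsDiag},
        ∑ v ∈ (univ.filter fun v : ι → J => ¬ Injective v).filter (fun v => (e.1.map v).IsDiag),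
          ∏ i, q (v i) :=
        sum_le_sum_sum_filter_of_forall_exists (fun v _ => prod_nonneg fun i _ => hq0 (v i))
          _ hcover
    _ ≤ ∑ _e : {z : Sym2 ι // ¬ z.IsDiag}, C := by
        refine sum_le_sum fun ⟨z, hz⟩ _ => ?_
        induction z using Sym2.ind with
        | h a b =>
          have hab : a ≠ b := Sym2.mk_isDiag_iff.not.1 hz
          refine (sum_le_sum_of_subset_of_nonneg ?_ fun v _ _ => ?_).trans
            (sum_prod_filter_apply_eq_apply_le hq0 hq1 hqC hab)
          · intro v
            simp [Sym2.map_mk]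
          · exact prod_nonneg fun i _ => hq0 (v i)
    _ = (Fintype.card ι).choose 2 * C := by
        rw [sum_const, card_univ, Sym2.card_subtype_not_diag, nsmul_eq_mul]

theorem div_sum_le_div_card_mul {J : Type*} [Fintype J] [Nonempty J] {f : J → ℝ} {m M : ℝ}
    (hm : 0 < m) (hlo : ∀ j, m ≤ f j) (hhi : ∀ j, f j ≤ M) (j : J) :
    f j / ∑ i, f i ≤ M / (Fintype.card J * m) := by
  have hden : Fintype.card J * m ≤ ∑ i, f i := by
    simpa using card_nsmul_le_sum univ f m fun i _ => hlo i
  exact div_le_div₀ (hm.le.trans ((hlo j).trans (hhi j))) (hhi j)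
    (mul_pos (by exact_mod_cast Fintype.card_pos) hm) hden

theorem exp_inner_div_sum_exp_inner_le {E J : Type*} [NormedAddCommGroup E]
    [InnerProductSpace ℝ E] [Fintype J] [Nonempty J] {K : ℝ} {x : J → E}
    (hx : ∀ j, ‖x j‖ ≤ K) (β : E) (j : J) :
    Real.exp ⟪β, x j⟫ / ∑ i, Real.exp ⟪β, x i⟫ ≤ Real.exp (2 * K * ‖β‖) / Fintype.card J := by
  have hinner : ∀ i, |⟪β, x i⟫| ≤ K * ‖β‖ := fun i =>
    (abs_real_inner_le_norm β (x i)).trans <| by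
      rw [mul_comm]; exact mul_le_mul_of_nonneg_right (hx i) (norm_nonneg β)
  calc _ ≤ Real.exp (K * ‖β‖) / (Fintype.card J * Real.exp (-(K * ‖β‖))) :=
        div_sum_le_div_card_mul (Real.exp_pos _)
          (fun i => Real.exp_le_exp.2 (neg_le_of_abs_le (hinner i)))
          (fun i => Real.exp_le_exp.2 (le_of_abs_le (hinner i))) j
    _ = Real.exp (2 * K * ‖β‖) / Fintype.card J := by
        rw [Real.exp_neg, div_mul_eq_div_div, div_inv_eq_mul, div_mul_eq_mul_div, ← Real.exp_add]
        ring_nf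

theorem prob_not_injective_weights_le_general
    {p : ℕ} {J : Type*} [Fintype J] [Nonempty J] [DecidableEq J]
    (K : ℝ) (hK : 0 ≤ K) (L : ℕ)
    (x : J → EuclideanSpace ℝ (Fin p)) (hx : ∀ j, ‖x j‖ ≤ K)
    (β : EuclideanSpace ℝ (Fin p)) :
    ∑ v ∈ Finset.univ.filter (fun v : Fin L → J => ¬ Function.Injective v),
        ∏ l, (Real.exp ⟪β, x (v l)⟫ / ∑ j', Real.exp ⟪β, x j'⟫)
      ≤ (L.choose 2 : ℝ) * Real.exp (4 * K * ‖β‖) / (Fintype.card J : ℝ) := by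
  have hW : 0 < ∑ j', Real.exp ⟪β, x j'⟫ := sum_pos (fun j _ => Real.exp_pos _) univ_nonempty
  have hq1 : ∑ j, Real.exp ⟪β, x j⟫ / ∑ j', Real.exp ⟪β, x j'⟫ = 1 := by
    rw [← sum_div, div_self hW.ne']
  have hqC : ∀ j, Real.exp ⟪β, x j⟫ / ∑ j', Real.exp ⟪β, x j'⟫
      ≤ Real.exp (4 * K * ‖β‖) / Fintype.card J := fun j =>
    (exp_inner_div_sum_exp_inner_le hx β j).trans <| by
      gcongr; nlinarith [norm_nonneg β]
  simpa [mul_div_assoc] using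
    sum_prod_filter_not_injective_le (ι := Fin L) (fun j => by positivity) hq1 hqC

/-- If `‖x j‖ ≤ K` for all `j`, and `π(β,·)` is the probability mass function
`π(β,j) = exp⟪β, x j⟫ / Σ_{j'} exp⟪β, x j'⟫` on `J`, then under the product
measure `π(β,·)^{⊗L}` on `J^L` (modeling `L` i.i.d. draws) the probability that
the coordinates are not pairwise distinct is at most
`binom(L,2) · exp(4K‖β‖) / |J|`. -/
theorem prob_not_injective_weights_le
    {p : ℕ} {J : Type*} [Fintype J] [Nonempty J] [DecidableEq J]
    (K : ℝ) (hK : 0 ≤ K) (L : ℕ) (hL : 1 ≤ L)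
    (x : J → EuclideanSpace ℝ (Fin p)) (hx : ∀ j, ‖x j‖ ≤ K)
    (β : EuclideanSpace ℝ (Fin p)) :
    ∑ v ∈ Finset.univ.filter (fun v : Fin L → J => ¬ Function.Injective v),
        ∏ l, (Real.exp ⟪β, x (v l)⟫ / ∑ j', Real.exp ⟪β, x j'⟫)
      ≤ (L.choose 2 : ℝ) * Real.exp (4 * K * ‖β‖) / (Fintype.card J : ℝ) :=
  prob_not_injective_weights_le_general K hK L x hx β
end

section
/- Let j_1, …, j_L be independent and identically distributed draws from the probability mass function μ(j) = w(j)/Σ_{j'∈J} w(j') on J (i.e., consider the product measure μ^{⊗L} on J^L), and let D be the event that the coordinates are pairwise distinct (which has positive probability). Then the conditional expectation of Σ_{l=1}^L x(j_l) given D equals (Σ_{S⊆J, |S|=L} (Π_{j∈S} w(j)) · (Σ_{j∈S} x(j))) / (Σ_{S⊆J, |S|=L} Π_{j∈S} w(j)). -/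
/-!
An injective tuple `v : Fin L → J` has probability `(∏ j ∈ S, w j) / W ^ L`, with `W = ∑ j, w j`, and
`∑ l, x (v l) = ∑ j ∈ S, x j`, where `S` is its image, an `L`-subset of `J`. Each `L`-subset
is the image of exactly `L !` injective tuples, so numerator and denominator of the
conditional expectation are the subset sums times the same factor `L ! / W ^ L`, which cancels.
-/

open Finset Function Nat

section InjectiveTuples

variable {J : Type*} [Fintype J] [DecidableEq J]

theorem card_filter_injective_image_eq (L : ℕ) {S : Finset J} (hS : #S = L) :
    #{v : Fin L → J | Injective v ∧ univ.image v = S} = L ! := by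
  calc #{v : Fin L → J | Injective v ∧ univ.image v = S}
      = #(univ : Finset (Fin L ≃ S)) := by
        symm
        refine card_bij (fun e _ => Subtype.val ∘ e) (fun e _ => ?_)
          (fun e _ e' _ h => Equiv.ext fun l => Subtype.ext (congrFun h l)) (fun v hv => ?_)
        · refine mem_filter.2 ⟨mem_univ _, Subtype.val_injective.comp e.injective, ?_⟩
          ext j
          simp only [mem_image, mem_univ, true_and, comp_apply]
          exact ⟨fun ⟨l, hl⟩ => hl ▸ (e l).2, fun hj => ⟨e.symm ⟨j, hj⟩, by simp⟩⟩
        · obtain ⟨-, hinj, himage⟩ := mem_filter.1 hv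
          have hmem : ∀ l, v l ∈ S := fun l => himage ▸ mem_image_of_mem v (mem_univ l)
          let e : Fin L → S := fun l => ⟨v l, hmem l⟩
          have he : Injective e := fun a b h => hinj (congrArg Subtype.val h)
          refine ⟨Equiv.ofBijective e ((Fintype.bijective_iff_injective_and_card e).2
            ⟨he, by simp [hS]⟩), mem_univ _, rfl⟩
    _ = L ! := by
        rw [Finset.card_univ, Fintype.card_equiv (Fintype.equivOfCardEq (by simp [hS]))]
        simp

theorem sum_filter_injective_image {M : Type*} [AddCommMonoid M] (L : ℕ) (g : Finset J → M) :
    ∑ v : Fin L → J with Injective v, g (univ.image v) =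
      L ! • ∑ S ∈ powersetCard L univ, g S := by
  have hmaps : ∀ v ∈ ({v : Fin L → J | Injective v} : Finset _),
      univ.image v ∈ powersetCard L univ := fun v hv => by
    simp [mem_powersetCard, card_image_of_injective _ (mem_filter.1 hv).2]
  rw [← sum_fiberwise_of_maps_to hmaps, smul_sum]
  refine sum_congr rfl fun S hS => ?_
  rw [filter_filter, sum_congr rfl fun v hv => by rw [(mem_filter.1 hv).2.2], sum_const,
    card_filter_injective_image_eq L (mem_powersetCard.1 hS).2]

end InjectiveTuples

theorem conditional_distinct_expectation_eq_general
    {p : ℕ} {J : Type*} [Fintype J] [DecidableEq J]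
    (L : ℕ) (hLJ : L ≤ Fintype.card J)
    (w : J → ℝ) (hw : ∀ j, 0 < w j)
    (x : J → EuclideanSpace ℝ (Fin p)) :
    0 < (∑ v ∈ Finset.univ.filter (fun v : Fin L → J => Function.Injective v),
          ∏ l, (w (v l) / ∑ j', w j')) ∧
    (∑ v ∈ Finset.univ.filter (fun v : Fin L → J => Function.Injective v),
          ∏ l, (w (v l) / ∑ j', w j'))⁻¹ •
        (∑ v ∈ Finset.univ.filter (fun v : Fin L → J => Function.Injective v),
          (∏ l, (w (v l) / ∑ j', w j')) • ∑ l, x (v l))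
      = (∑ S' ∈ Finset.powersetCard L (Finset.univ : Finset J), ∏ j ∈ S', w j)⁻¹ •
          ∑ S ∈ Finset.powersetCard L (Finset.univ : Finset J),
            (∏ j ∈ S, w j) • ∑ j ∈ S, x j := by
  set W := ∑ j', w j'
  have hprob : ∀ v : Fin L → J, Injective v →
      ∏ l, (w (v l) / W) = (W ^ L)⁻¹ * ∏ j ∈ univ.image v, w j := fun v hv => by
    rw [prod_image hv.injOn, prod_div_distrib, prod_const, Finset.card_univ, Fintype.card_fin,
      div_eq_inv_mul]
  have hpos : 0 < ∑ v : Fin L → J with Injective v, ∏ l, (w (v l) / W) := by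
    obtain ⟨f⟩ := Embedding.nonempty_of_card_le (by simpa using hLJ : Fintype.card (Fin L) ≤ _)
    refine sum_pos (fun v _ => prod_pos fun l _ => div_pos (hw _) ?_) ⟨f, by simp [f.injective]⟩
    exact sum_pos (fun j _ => hw j) ⟨v l, mem_univ _⟩
  have hden : ∑ v : Fin L → J with Injective v, ∏ l, (w (v l) / W) =
      (L ! * (W ^ L)⁻¹) * ∑ S ∈ powersetCard L univ, ∏ j ∈ S, w j := by
    rw [sum_congr rfl fun v hv => hprob v (mem_filter.1 hv).2,
      sum_filter_injective_image L fun S => (W ^ L)⁻¹ * ∏ j ∈ S, w j, nsmul_eq_mul, ← mul_sum,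
      mul_assoc]
  have hnum : ∑ v : Fin L → J with Injective v, (∏ l, (w (v l) / W)) • ∑ l, x (v l) =
      (L ! * (W ^ L)⁻¹) • ∑ S ∈ powersetCard L univ, (∏ j ∈ S, w j) • ∑ j ∈ S, x j := by
    rw [sum_congr rfl fun v hv => by
        rw [hprob v (mem_filter.1 hv).2, ← sum_image (mem_filter.1 hv).2.injOn],
      sum_filter_injective_image L fun S => ((W ^ L)⁻¹ * ∏ j ∈ S, w j) • ∑ j ∈ S, x j,
      ← Nat.cast_smul_eq_nsmul ℝ]
    simp only [mul_smul, smul_sum]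
  have hc : (L ! * (W ^ L)⁻¹ : ℝ) ≠ 0 := left_ne_zero_of_mul (hden ▸ hpos).ne'
  refine ⟨hpos, ?_⟩
  rw [hden, hnum, smul_smul, mul_inv_rev, mul_assoc, inv_mul_cancel₀ hc, mul_one]

/-- For `L` i.i.d. draws `j_1, …, j_L` from the pmf `μ(j) = w(j)/Σ_{j'} w(j')`
on a finite set `J` (with `L ≤ |J|` and strictly positive weights), the event
`D` that the coordinates are pairwise distinct has positive probability, and
the conditional expectation of `Σ_l x(j_l)` given `D` equals
`(Σ_{S⊆J,|S|=L} (Π_{j∈S} w j) • Σ_{j∈S} x j) / (Σ_{S⊆J,|S|=L} Π_{j∈S} w j)`. -/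
theorem conditional_distinct_expectation_eq
    {p : ℕ} {J : Type*} [Fintype J] [DecidableEq J]
    (L : ℕ) (hL : 1 ≤ L) (hLJ : L ≤ Fintype.card J)
    (w : J → ℝ) (hw : ∀ j, 0 < w j)
    (x : J → EuclideanSpace ℝ (Fin p)) :
    0 < (∑ v ∈ Finset.univ.filter (fun v : Fin L → J => Function.Injective v),
          ∏ l, (w (v l) / ∑ j', w j')) ∧
    (∑ v ∈ Finset.univ.filter (fun v : Fin L → J => Function.Injective v),
          ∏ l, (w (v l) / ∑ j', w j'))⁻¹ •
        (∑ v ∈ Finset.univ.filter (fun v : Fin L → J => Function.Injective v),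
          (∏ l, (w (v l) / ∑ j', w j')) • ∑ l, x (v l))
      = (∑ S' ∈ Finset.powersetCard L (Finset.univ : Finset J), ∏ j ∈ S', w j)⁻¹ •
          ∑ S ∈ Finset.powersetCard L (Finset.univ : Finset J),
            (∏ j ∈ S, w j) • ∑ j ∈ S, x j :=
  conditional_distinct_expectation_eq_general L hLJ w hw x
end

section
/- If ‖x(j)‖ ≤ K for every j ∈ J, then for every β ∈ ℝ^p, ‖E(β;L) − Ẽ(β;L)‖ ≤ K · L² · (L − 1) · exp(4 K ‖β‖) / |J|. -/
open scoped RealInnerProductSpace BigOperators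

private lemma swap_sum_mem {M : Type*} [AddCommMonoid M] {J : Type*} [Fintype J] [DecidableEq J]
    (𝒮 : Finset (Finset J)) (F : Finset J → J → M) :
    ∑ S ∈ 𝒮, ∑ j ∈ S, F S j
      = ∑ j : J, ∑ S ∈ 𝒮.filter (fun S => j ∈ S), F S j := by
  have h : ∀ S ∈ 𝒮, ∑ j ∈ S, F S j = ∑ j : J, if j ∈ S then F S j else 0 := by
    intro S _
    rw [Finset.sum_ite_mem, Finset.univ_inter]
  rw [Finset.sum_congr rfl h, Finset.sum_comm]
  exact Finset.sum_congr rfl fun j _ => (Finset.sum_filter _ _).symm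

set_option maxHeartbeats 2000000 in
/-- If `‖x j‖ ≤ K` for all `j ∈ J`, then for every `β`, the distance between
the exact weighted mean `E(β;L)` over size-`L` subsets and its multiset
approximation `Ẽ(β;L)` is at most `K·L²·(L−1)·exp(4K‖β‖)/|J|`. -/
theorem mean_subset_approx_bound
    {p : ℕ} (K : ℝ) (hK : 0 ≤ K) (L : ℕ) (hL : 1 ≤ L)
    {J : Type*} [Fintype J] (hLJ : L ≤ Fintype.card J)
    (x : J → EuclideanSpace ℝ (Fin p)) (hx : ∀ j, ‖x j‖ ≤ K)
    (β : EuclideanSpace ℝ (Fin p)) :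
    ‖((∑ S ∈ Finset.powersetCard L (Finset.univ : Finset J),
          Real.exp ⟪β, ∑ j ∈ S, x j⟫)⁻¹ •
        ∑ S ∈ Finset.powersetCard L (Finset.univ : Finset J),
          Real.exp ⟪β, ∑ j ∈ S, x j⟫ • ∑ j ∈ S, x j)
      - (L : ℝ) • ((∑ j, Real.exp ⟪β, x j⟫)⁻¹ • ∑ j, Real.exp ⟪β, x j⟫ • x j)‖
      ≤ K * (L : ℝ) ^ 2 * ((L : ℝ) - 1) * Real.exp (4 * K * ‖β‖)
          / (Fintype.card J : ℝ) := by
  classical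
  have hn0 : 0 < Fintype.card J := lt_of_lt_of_le hL hLJ
  haveI : Nonempty J := Fintype.card_pos_iff.mp hn0
  set n : ℕ := Fintype.card J with hn
  set b : ℝ := ‖β‖ with hb
  have hb0 : 0 ≤ b := norm_nonneg _
  set g : J → ℝ := fun j => Real.exp ⟪β, x j⟫ with hgdef
  have hgpos : ∀ j, 0 < g j := fun j => Real.exp_pos _
  set M : ℝ := Real.exp (K * b) with hM
  set m : ℝ := Real.exp (-(K * b)) with hm
  have hinner : ∀ j, |⟪β, x j⟫| ≤ K * b := by
    intro j
    refine le_trans (abs_real_inner_le_norm β (x j)) ?_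
    rw [mul_comm]
    exact mul_le_mul_of_nonneg_right (hx j) hb0
  have hgle : ∀ j, g j ≤ M := fun j =>
    Real.exp_le_exp.2 (le_trans (le_abs_self _) (hinner j))
  have hgge : ∀ j, m ≤ g j := fun j =>
    Real.exp_le_exp.2 (neg_le_of_abs_le (hinner j))
  set 𝒮 : Finset (Finset J) := Finset.powersetCard L (Finset.univ : Finset J) with h𝒮
  have hcard : ∀ S ∈ 𝒮, S.card = L := fun S hS => Finset.mem_powersetCard_univ.1 hS
  set w : Finset J → ℝ := fun S => ∏ i ∈ S, g i with hwdef
  have hwpos : ∀ S, 0 < w S := fun S => Finset.prod_pos fun i _ => hgpos i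
  have hwrw : ∀ S ∈ 𝒮, Real.exp ⟪β, ∑ j ∈ S, x j⟫ = w S := by
    intro S _
    rw [inner_sum, Real.exp_sum]
  set W : ℝ := ∑ S ∈ 𝒮, w S with hW
  have h𝒮ne : 𝒮.Nonempty := Finset.powersetCard_nonempty.2 (by simpa using hLJ)
  have hWpos : 0 < W := Finset.sum_pos (fun S _ => hwpos S) h𝒮ne
  set e1 : ℝ := ∑ j, g j with he1
  have he1pos : 0 < e1 := Finset.sum_pos (fun j _ => hgpos j) Finset.univ_nonempty
  set T : J → ℝ := fun j => ∑ S ∈ 𝒮.filter (fun S => j ∈ S), w S with hT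
  have hTpos : ∀ j, 0 ≤ T j := fun j => Finset.sum_nonneg fun S _ => (hwpos S).le
  set P : J → J → ℝ := fun j k => ∑ S ∈ 𝒮.filter (fun S => j ∈ S ∧ k ∈ S), w S with hP
  have hPsymm : ∀ j k, P j k = P k j := by
    intro j k
    apply Finset.sum_congr _ (fun _ _ => rfl)
    apply Finset.filter_congr
    intro S _; exact and_comm
  have hPpos : ∀ j k, 0 ≤ P j k := fun j k => Finset.sum_nonneg fun S _ => (hwpos S).le
  -- F2 : L • W = ∑ j, T j
  have hLW : (L : ℝ) * W = ∑ j, T j := by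
    rw [hT, ← swap_sum_mem]
    rw [hW, Finset.mul_sum]
    refine Finset.sum_congr rfl fun S hS => ?_
    rw [Finset.sum_const, hcard S hS, nsmul_eq_mul]
  -- bijection lemma
  have hQ : ∀ j k : J, j ≠ k →
      g k * (∑ S ∈ 𝒮.filter (fun S => j ∈ S ∧ k ∉ S), w S)
        = g j * (∑ S ∈ 𝒮.filter (fun S => k ∈ S ∧ j ∉ S), w S) := by
    intro j k hjk
    rw [Finset.mul_sum, Finset.mul_sum]
    refine Finset.sum_nbij' (fun S => insert k (S.erase j)) (fun S => insert j (S.erase k))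
      ?_ ?_ ?_ ?_ ?_
    · intro S hS
      simp only [Finset.mem_filter, h𝒮, Finset.mem_powersetCard_univ] at hS ⊢
      obtain ⟨hSc, hjS, hkS⟩ := hS
      have hk' : k ∉ S.erase j := fun h => hkS (Finset.mem_of_mem_erase h)
      refine ⟨?_, Finset.mem_insert_self _ _, ?_⟩
      · rw [Finset.card_insert_of_notMem hk', Finset.card_erase_of_mem hjS, hSc,
          Nat.sub_add_cancel hL]
      · simp only [Finset.mem_insert, Finset.mem_erase]
        push_neg
        exact ⟨hjk, fun h _ => absurd rfl h⟩
    · intro S hS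
      simp only [Finset.mem_filter, h𝒮, Finset.mem_powersetCard_univ] at hS ⊢
      obtain ⟨hSc, hkS, hjS⟩ := hS
      have hj' : j ∉ S.erase k := fun h => hjS (Finset.mem_of_mem_erase h)
      refine ⟨?_, Finset.mem_insert_self _ _, ?_⟩
      · rw [Finset.card_insert_of_notMem hj', Finset.card_erase_of_mem hkS, hSc,
          Nat.sub_add_cancel hL]
      · simp only [Finset.mem_insert, Finset.mem_erase]
        push_neg
        exact ⟨hjk.symm, fun h _ => absurd rfl h⟩
    · intro S hS
      simp only [Finset.mem_filter] at hS
      obtain ⟨_, hjS, hkS⟩ := hS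
      have hk' : k ∉ S.erase j := fun h => hkS (Finset.mem_of_mem_erase h)
      simp only [Finset.erase_insert hk', Finset.insert_erase hjS]
    · intro S hS
      simp only [Finset.mem_filter] at hS
      obtain ⟨_, hkS, hjS⟩ := hS
      have hj' : j ∉ S.erase k := fun h => hjS (Finset.mem_of_mem_erase h)
      simp only [Finset.erase_insert hj', Finset.insert_erase hkS]
    · intro S hS
      simp only [Finset.mem_filter] at hS
      obtain ⟨_, hjS, hkS⟩ := hS
      have hk' : k ∉ S.erase j := fun h => hkS (Finset.mem_of_mem_erase h)
      have h1 : w S = g j * ∏ i ∈ S.erase j, g i := (Finset.mul_prod_erase S g hjS).symm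
      have h2 : w (insert k (S.erase j)) = g k * ∏ i ∈ S.erase j, g i :=
        Finset.prod_insert hk'
      rw [h1, h2]; ring
  -- split: T j = P j k + Q j k
  have hsplit : ∀ j k : J, T j = P j k + ∑ S ∈ 𝒮.filter (fun S => j ∈ S ∧ k ∉ S), w S := by
    intro j k
    simp only [hT, hP]
    rw [← Finset.sum_filter_add_sum_filter_not (𝒮.filter (fun S => j ∈ S)) (fun S => k ∈ S) w,
      Finset.filter_filter, Finset.filter_filter]
  -- key per-j identity
  have hkey : ∀ j : J, e1 * T j - (L : ℝ) * (g j * W)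
      = ∑ k ∈ Finset.univ.erase j, (g k - g j) * P j k := by
    intro j
    have h1 : e1 * T j - (L : ℝ) * (g j * W)
        = ∑ k, (g k * T j - g j * T k) := by
      rw [Finset.sum_sub_distrib, ← Finset.sum_mul, ← Finset.mul_sum, ← hLW, ← he1]
      ring
    rw [h1, ← Finset.add_sum_erase _ _ (Finset.mem_univ j), sub_self, zero_add]
    refine Finset.sum_congr rfl fun k hk => ?_
    have hkj : k ≠ j := (Finset.mem_erase.1 hk).1
    have e1' : T j = P j k + ∑ S ∈ 𝒮.filter (fun S => j ∈ S ∧ k ∉ S), w S := hsplit j k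
    have e2' : T k = P k j + ∑ S ∈ 𝒮.filter (fun S => k ∈ S ∧ j ∉ S), w S := hsplit k j
    have e3 := hQ j k (Ne.symm hkj)
    rw [e1', e2', ← hPsymm j k]
    ring_nf
    linarith [e3]
  -- vector identity
  set A : EuclideanSpace ℝ (Fin p) := ∑ S ∈ 𝒮, w S • ∑ j ∈ S, x j with hA
  set B : EuclideanSpace ℝ (Fin p) := ∑ j, g j • x j with hB
  have hAj : A = ∑ j, T j • x j := by
    rw [hA]
    have : ∀ S ∈ 𝒮, w S • ∑ j ∈ S, x j = ∑ j ∈ S, w S • x j := fun S _ => Finset.smul_sum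
    rw [Finset.sum_congr rfl this, swap_sum_mem]
    exact Finset.sum_congr rfl fun j _ => (Finset.sum_smul).symm
  set D : EuclideanSpace ℝ (Fin p) :=
    ∑ j, (e1 * T j - (L : ℝ) * (g j * W)) • x j with hD
  have hDval : e1 • A - ((L : ℝ) * W) • B = D := by
    rw [hD, hAj, hB, Finset.smul_sum, Finset.smul_sum, ← Finset.sum_sub_distrib]
    refine Finset.sum_congr rfl fun j _ => ?_
    rw [smul_smul, smul_smul, ← sub_smul]
    congr 1
    ring
  -- bound on sum over k≠j of P
  have hPsum : ∀ j : J, ∑ k ∈ Finset.univ.erase j, P j k = (L : ℝ) * T j - T j := by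
    intro j
    have hPj : ∀ k, P j k = ∑ S ∈ (𝒮.filter (fun S => j ∈ S)).filter (fun S => k ∈ S), w S := by
      intro k
      rw [hP, Finset.filter_filter]
    have htot : ∑ k, P j k = (L : ℝ) * T j := by
      rw [Finset.sum_congr rfl fun k _ => hPj k, ← swap_sum_mem, hT, Finset.mul_sum]
      refine Finset.sum_congr rfl fun S hS => ?_
      rw [Finset.sum_const, hcard S (Finset.mem_filter.1 hS).1, nsmul_eq_mul]
    have hPjj : P j j = T j := by
      simp only [hP, hT]
      congr 1
      apply Finset.filter_congr
      intro S _
      simp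
    have := Finset.add_sum_erase Finset.univ (P j) (Finset.mem_univ j)
    rw [hPjj] at this
    linarith [htot, this]
  -- norm bound on D
  have hDbound : ‖D‖ ≤ K * M * ((L : ℝ) * ((L : ℝ) - 1)) * W := by
    rw [hD]
    refine le_trans (norm_sum_le _ _) ?_
    have hjb : ∀ j : J, ‖(e1 * T j - (L : ℝ) * (g j * W)) • x j‖
        ≤ (M * ((L : ℝ) * T j - T j)) * K := by
      intro j
      rw [norm_smul, Real.norm_eq_abs]
      have h1 : |e1 * T j - (L : ℝ) * (g j * W)| ≤ M * ((L : ℝ) * T j - T j) := by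
        rw [hkey j]
        refine le_trans (Finset.abs_sum_le_sum_abs _ _) ?_
        rw [← hPsum j, Finset.mul_sum]
        refine Finset.sum_le_sum fun k _ => ?_
        rw [abs_mul, abs_of_nonneg (hPpos j k)]
        refine mul_le_mul_of_nonneg_right ?_ (hPpos j k)
        rw [abs_sub_le_iff]
        constructor
        · nlinarith [hgpos j, hgpos k, hgle k, hgge j, Real.exp_pos (-(K*b))]
        · nlinarith [hgpos j, hgpos k, hgle j, hgge k, Real.exp_pos (-(K*b))]
      have h2 : 0 ≤ M * ((L : ℝ) * T j - T j) := by
        have := le_trans (abs_nonneg _) h1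
        linarith
      exact mul_le_mul h1 (hx j) (norm_nonneg _) h2
    refine le_trans (Finset.sum_le_sum fun j _ => hjb j) (le_of_eq ?_)
    calc ∑ j, (M * ((L : ℝ) * T j - T j)) * K
        = ∑ j, (K * M * ((L : ℝ) - 1)) * T j :=
          Finset.sum_congr rfl fun j _ => by ring
      _ = (K * M * ((L : ℝ) - 1)) * ∑ j, T j := (Finset.mul_sum _ _ _).symm
      _ = K * M * ((L : ℝ) * ((L : ℝ) - 1)) * W := by rw [← hLW]; ring
  -- rewrite the goal
  have hrw1 : ∑ S ∈ 𝒮, Real.exp ⟪β, ∑ j ∈ S, x j⟫ = W := Finset.sum_congr rfl hwrw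
  have hrw2 : ∑ S ∈ 𝒮, Real.exp ⟪β, ∑ j ∈ S, x j⟫ • (∑ j ∈ S, x j) = A :=
    Finset.sum_congr rfl fun S hS => by rw [hwrw S hS]
  rw [hrw1, hrw2]
  have hWne : W ≠ 0 := ne_of_gt hWpos
  have he1ne : e1 ≠ 0 := ne_of_gt he1pos
  have hs1 : (W * e1)⁻¹ * e1 = W⁻¹ := by
    rw [mul_inv, mul_assoc, inv_mul_cancel₀ he1ne, mul_one]
  have hs2 : (W * e1)⁻¹ * ((L : ℝ) * W) = (L : ℝ) * e1⁻¹ := by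
    rw [mul_inv, show W⁻¹ * e1⁻¹ * ((L : ℝ) * W) = (L : ℝ) * e1⁻¹ * (W⁻¹ * W) from by ring,
      inv_mul_cancel₀ hWne, mul_one]
  have hvec : W⁻¹ • A - (L : ℝ) • (e1⁻¹ • B) = ((W * e1)⁻¹) • D := by
    rw [← hDval, smul_sub, smul_smul, smul_smul, smul_smul, hs1, hs2]
  rw [hvec, norm_smul, Real.norm_eq_abs,
    abs_of_pos (inv_pos.2 (mul_pos hWpos he1pos))]
  have step1 : (W * e1)⁻¹ * ‖D‖ ≤ (W * e1)⁻¹ * (K * M * ((L : ℝ) * ((L : ℝ) - 1)) * W) :=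
    mul_le_mul_of_nonneg_left hDbound (le_of_lt (inv_pos.2 (mul_pos hWpos he1pos)))
  refine le_trans step1 ?_
  have heq1 : (W * e1)⁻¹ * (K * M * ((L : ℝ) * ((L : ℝ) - 1)) * W)
      = K * M * ((L : ℝ) * ((L : ℝ) - 1)) / e1 := by
    rw [div_eq_mul_inv, mul_inv,
      show W⁻¹ * e1⁻¹ * (K * M * ((L : ℝ) * ((L : ℝ) - 1)) * W)
        = K * M * ((L : ℝ) * ((L : ℝ) - 1)) * e1⁻¹ * (W⁻¹ * W) from by ring,
      inv_mul_cancel₀ hWne, mul_one]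
  rw [heq1]
  -- numeric estimates
  have hL1 : (1 : ℝ) ≤ (L : ℝ) := by exact_mod_cast hL
  have hLm1 : (0 : ℝ) ≤ (L : ℝ) - 1 := by linarith
  have hmpos : 0 < m := Real.exp_pos _
  have hnpos : (0 : ℝ) < (n : ℝ) := by exact_mod_cast hn0
  have he1n : (n : ℝ) * m ≤ e1 := by
    have : ∑ _j : J, m ≤ ∑ j, g j := Finset.sum_le_sum fun j _ => hgge j
    calc (n : ℝ) * m = ∑ _j : J, m := by
          rw [Finset.sum_const, Finset.card_univ, nsmul_eq_mul, hn]
      _ ≤ e1 := this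
  have hnum0 : 0 ≤ K * M * ((L : ℝ) * ((L : ℝ) - 1)) :=
    mul_nonneg (mul_nonneg hK (Real.exp_pos _).le)
      (mul_nonneg (Nat.cast_nonneg L) hLm1)
  have step2 : K * M * ((L : ℝ) * ((L : ℝ) - 1)) / e1
      ≤ K * M * ((L : ℝ) * ((L : ℝ) - 1)) / ((n : ℝ) * m) := by
    rw [div_le_div_iff₀ he1pos (mul_pos hnpos hmpos)]
    exact mul_le_mul_of_nonneg_left he1n hnum0
  refine le_trans step2 ?_
  have hMm : M / m = Real.exp (2 * K * b) := by
    rw [hM, hm, ← Real.exp_sub]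
    ring_nf
  have hMm' : M = Real.exp (2 * K * b) * m := by
    rw [hM, hm, ← Real.exp_add]
    ring_nf
  have heq2 : K * M * ((L : ℝ) * ((L : ℝ) - 1)) / ((n : ℝ) * m)
      = K * (L : ℝ) * ((L : ℝ) - 1) * Real.exp (2 * K * b) / (n : ℝ) := by
    rw [hMm', div_eq_div_iff (mul_pos hnpos hmpos).ne' hnpos.ne']
    ring
  rw [heq2]
  have hexp : Real.exp (2 * K * b) ≤ Real.exp (4 * K * b) :=
    Real.exp_le_exp.2 (by nlinarith)
  rw [div_le_div_iff₀ hnpos hnpos]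
  have hepos : 0 < Real.exp (2 * K * b) := Real.exp_pos _
  have he4pos : 0 < Real.exp (4 * K * b) := Real.exp_pos _
  have t1 : (L : ℝ) * ((L : ℝ) - 1) ≤ (L : ℝ) ^ 2 * ((L : ℝ) - 1) :=
    mul_le_mul_of_nonneg_right (by nlinarith) hLm1
  have t2 : (L : ℝ) * ((L : ℝ) - 1) * Real.exp (2 * K * b)
      ≤ (L : ℝ) ^ 2 * ((L : ℝ) - 1) * Real.exp (4 * K * b) :=
    mul_le_mul t1 hexp hepos.le (by positivity)
  have t3 : K * ((L : ℝ) * ((L : ℝ) - 1) * Real.exp (2 * K * b)) * (n : ℝ)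
      ≤ K * ((L : ℝ) ^ 2 * ((L : ℝ) - 1) * Real.exp (4 * K * b)) * (n : ℝ) :=
    mul_le_mul_of_nonneg_right (mul_le_mul_of_nonneg_left t2 hK) hnpos.le
  nlinarith [t3]
end

section
/- For every β ∈ ℝ^p, both log PL and log P̃L are differentiable at β and ‖∇[log PL(β)] − ∇[log P̃L(β)]‖ ≤ K · exp(4 K ‖β‖) · Σ_{m=1}^n |J_m|² (|J_m| − 1) / |𝒥_m|. -/
open scoped RealInnerProductSpace BigOperators

/-!
Write `a_l = exp ⟪β, x_l⟫` and `k = |J_m|`. At one event the exact gradient of the log-normaliser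
is `∑_j π_j x_j`, where `π_j = A_j / Z` (`A_j = inclusionWeight a k j`) is the probability that
`j` lies in a random `k`-subset drawn with probability proportional to `∏_{l ∈ S} a_l`; the
duplication approximation replaces `π_j` by `k a_j / ∑_l a_l`. Clearing denominators, the `j`-th
coefficient of the difference is `∑_{i ≠ j} (a_i - a_j) E_ij`, with `E_ij = pairWeight a k i j`
the weight of the subsets containing both `i` and `j`: swapping `i` and `j` matches the subsets
containing exactly one of them. As `∑_{i ≠ j} E_ij = (k - 1) A_j` and `∑_j A_j = k Z`, the
coefficients differ in total by at most `k (k - 1) max |a_i - a_j| / ∑_l a_l`, and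
`e^{-K‖β‖} ≤ a_l ≤ e^{K‖β‖}` finishes the estimate.
-/

open Finset InnerProductSpace

section Gradient

variable {F : Type*} [NormedAddCommGroup F] [InnerProductSpace ℝ F] [CompleteSpace F] {β : F}

theorem hasGradientAt_inner_const_right (v : F) : HasGradientAt (fun y : F => ⟪y, v⟫) v β := by
  have hv : (fun y : F => ⟪y, v⟫) = toDual ℝ F v := funext fun y => real_inner_comm v y
  rw [hasGradientAt_iff_hasFDerivAt, hv]
  exact (toDual ℝ F v : F →L[ℝ] ℝ).hasFDerivAt

theorem HasGradientAt.fun_sum {κ : Type*} {t : Finset κ} {f : κ → F → ℝ} {g : κ → F}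
    (h : ∀ i ∈ t, HasGradientAt (f i) (g i) β) :
    HasGradientAt (fun y => ∑ i ∈ t, f i y) (∑ i ∈ t, g i) β := by
  rw [hasGradientAt_iff_hasFDerivAt, map_sum]
  exact HasFDerivAt.fun_sum h

theorem HasGradientAt.sub {f g : F → ℝ} {f' g' : F} (hf : HasGradientAt f f' β)
    (hg : HasGradientAt g g' β) : HasGradientAt (fun y => f y - g y) (f' - g') β := by
  rw [hasGradientAt_iff_hasFDerivAt, map_sub]
  exact HasFDerivAt.sub hf hg

theorem HasGradientAt.const_mul {f : F → ℝ} {f' : F} (c : ℝ) (hf : HasGradientAt f f' β) :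
    HasGradientAt (fun y => c * f y) (c • f') β := by
  rw [hasGradientAt_iff_hasFDerivAt, map_smul]
  exact HasFDerivAt.const_mul hf c

theorem HasDerivAt.comp_hasGradientAt (β : F) {h : ℝ → ℝ} {h' : ℝ} {f : F → ℝ} {f' : F}
    (hh : HasDerivAt h h' (f β)) (hf : HasGradientAt f f' β) :
    HasGradientAt (fun y => h (f y)) (h' • f') β := by
  rw [hasGradientAt_iff_hasFDerivAt, map_smul]
  exact hh.comp_hasFDerivAt β hf

theorem HasGradientAt.log_sum_exp {κ : Type*} {t : Finset κ} (ht : t.Nonempty)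
    {f : κ → F → ℝ} {g : κ → F} (hf : ∀ i ∈ t, HasGradientAt (f i) (g i) β) :
    HasGradientAt (fun y => Real.log (∑ i ∈ t, Real.exp (f i y)))
      ((∑ i ∈ t, Real.exp (f i β))⁻¹ • ∑ i ∈ t, Real.exp (f i β) • g i) β := by
  have hsum : HasGradientAt (fun y => ∑ i ∈ t, Real.exp (f i y))
      (∑ i ∈ t, Real.exp (f i β) • g i) β :=
    .fun_sum fun i hi => (Real.hasDerivAt_exp _).comp_hasGradientAt β (hf i hi)
  have hpos : 0 < ∑ i ∈ t, Real.exp (f i β) := sum_pos (fun i _ => Real.exp_pos (f i β)) ht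
  exact (Real.hasDerivAt_log hpos.ne').comp_hasGradientAt β hsum

end Gradient

theorem Finset.sum_sum_filter_mem {α M : Type*} [DecidableEq α] [AddCommMonoid M]
    (u : Finset α) (T : Finset (Finset α)) (f : Finset α → M) :
    ∑ i ∈ u, ∑ S ∈ T with i ∈ S, f S = ∑ S ∈ T, #(u ∩ S) • f S := by
  simp_rw [sum_filter]
  rw [sum_comm]
  refine sum_congr rfl fun S _ => ?_
  rw [← sum_filter, filter_mem_eq_inter, sum_const]

theorem natCast_mul_natCast_sub_one_nonneg (k : ℕ) : (0 : ℝ) ≤ k * (k - 1) := by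
  cases k <;> simp
  positivity

section KSubsets

variable {ι : Type*} [Fintype ι] [DecidableEq ι] (a : ι → ℝ) (k : ℕ)

def inclusionWeight (j : ι) : ℝ := ∑ S ∈ powersetCard k univ with j ∈ S, ∏ l ∈ S, a l

def pairWeight (i j : ι) : ℝ := ∑ S ∈ powersetCard k univ with i ∈ S ∧ j ∈ S, ∏ l ∈ S, a l

theorem sum_inclusionWeight :
    ∑ j, inclusionWeight a k j = k * ∑ S ∈ powersetCard k univ, ∏ l ∈ S, a l := by
  simp_rw [inclusionWeight]
  rw [sum_sum_filter_mem, mul_sum]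
  refine sum_congr rfl fun S hS => ?_
  rw [univ_inter, (mem_powersetCard.1 hS).2, nsmul_eq_mul]

theorem sum_erase_pairWeight (j : ι) :
    ∑ i ∈ univ.erase j, pairWeight a k i j = (k - 1) * inclusionWeight a k j := by
  have hfilter : ∀ i, (powersetCard k univ).filter (fun S => i ∈ S ∧ j ∈ S) =
      ((powersetCard k univ).filter (j ∈ ·)).filter (i ∈ ·) := by
    intro i
    rw [filter_filter]
    simp_rw [and_comm]
  simp_rw [pairWeight, hfilter, sum_sum_filter_mem, inclusionWeight, mul_sum]
  refine sum_congr rfl fun S hS => ?_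
  obtain ⟨hS, hjS⟩ := mem_filter.1 hS
  rw [erase_inter, univ_inter, card_erase_of_mem hjS, (mem_powersetCard.1 hS).2, nsmul_eq_mul,
    Nat.cast_sub (card_pos.2 ⟨j, hjS⟩ |>.trans_eq (mem_powersetCard.1 hS).2), Nat.cast_one]

theorem mul_sum_filter_mem_not_mem_comm (i j : ι) :
    a i * ∑ S ∈ powersetCard k univ with j ∈ S ∧ i ∉ S, ∏ l ∈ S, a l =
      a j * ∑ S ∈ powersetCard k univ with i ∈ S ∧ j ∉ S, ∏ l ∈ S, a l := by
  rw [mul_sum, mul_sum]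
  refine sum_equiv (Equiv.finsetCongr (Equiv.swap i j)) (fun S => ?_) fun S hS => ?_
  · simp [and_comm]
  · obtain ⟨-, hjS, hiS⟩ := mem_filter.1 hS
    have hfix : ∀ l ∈ S.erase j, Equiv.swap i j l = l := fun l hl =>
      Equiv.swap_apply_of_ne_of_ne (ne_of_mem_of_not_mem (mem_of_mem_erase hl) hiS)
        (ne_of_mem_erase hl)
    rw [Equiv.finsetCongr_apply, prod_map, Equiv.coe_toEmbedding, ← mul_prod_erase S a hjS,
      ← mul_prod_erase S (fun l => a (Equiv.swap i j l)) hjS,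
      prod_congr rfl fun l hl => congrArg a (hfix l hl), Equiv.swap_apply_right]
    ring

theorem inclusionWeight_eq_pairWeight_add (i j : ι) :
    inclusionWeight a k j =
      pairWeight a k i j + ∑ S ∈ powersetCard k univ with j ∈ S ∧ i ∉ S, ∏ l ∈ S, a l := by
  rw [inclusionWeight, pairWeight, ← sum_filter_add_sum_filter_not _ (i ∈ ·), filter_filter,
    filter_filter]
  simp_rw [and_comm]

theorem pairWeight_comm (i j : ι) : pairWeight a k i j = pairWeight a k j i := by
  simp_rw [pairWeight, and_comm]

theorem mul_inclusionWeight_sub_mul_inclusionWeight (i j : ι) :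
    a i * inclusionWeight a k j - a j * inclusionWeight a k i =
      (a i - a j) * pairWeight a k i j := by
  rw [inclusionWeight_eq_pairWeight_add a k i j, inclusionWeight_eq_pairWeight_add a k j i,
    pairWeight_comm a k j i]
  linear_combination mul_sum_filter_mem_not_mem_comm a k i j

theorem pairWeight_nonneg (ha : ∀ j, 0 ≤ a j) (i j : ι) : 0 ≤ pairWeight a k i j :=
  sum_nonneg fun _ _ => prod_nonneg fun l _ => ha l

theorem sum_abs_sum_mul_inclusionWeight_sub_le (ha : ∀ j, 0 ≤ a j) {δ : ℝ}
    (hδ : ∀ i j, |a i - a j| ≤ δ) :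
    ∑ j, |(∑ i, a i) * inclusionWeight a k j -
        k * a j * ∑ S ∈ powersetCard k univ, ∏ l ∈ S, a l| ≤
      δ * (k * (k - 1)) * ∑ S ∈ powersetCard k univ, ∏ l ∈ S, a l := by
  have hcross : ∀ j, (∑ i, a i) * inclusionWeight a k j -
      k * a j * ∑ S ∈ powersetCard k univ, ∏ l ∈ S, a l =
        ∑ i ∈ univ.erase j, (a i - a j) * pairWeight a k i j := by
    intro j
    rw [sum_erase _ (by rw [sub_self, zero_mul])]
    simp_rw [← mul_inclusionWeight_sub_mul_inclusionWeight]
    rw [sum_sub_distrib, ← sum_mul, ← mul_sum, sum_inclusionWeight]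
    ring
  calc ∑ j, |(∑ i, a i) * inclusionWeight a k j -
          k * a j * ∑ S ∈ powersetCard k univ, ∏ l ∈ S, a l|
      ≤ ∑ j, ∑ i ∈ univ.erase j, δ * pairWeight a k i j := by
        refine sum_le_sum fun j _ => ?_
        rw [hcross]
        refine (abs_sum_le_sum_abs _ _).trans (sum_le_sum fun i _ => ?_)
        rw [abs_mul, abs_of_nonneg (pairWeight_nonneg a k ha i j)]
        exact mul_le_mul_of_nonneg_right (hδ i j) (pairWeight_nonneg a k ha i j)
    _ = δ * (k * (k - 1)) * ∑ S ∈ powersetCard k univ, ∏ l ∈ S, a l := by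
        simp_rw [← mul_sum, sum_erase_pairWeight, ← mul_sum, sum_inclusionWeight]
        ring

theorem sum_smul_sum_eq_sum_inclusionWeight_smul {E : Type*} [AddCommGroup E] [Module ℝ E]
    (x : ι → E) :
    ∑ S ∈ powersetCard k univ, (∏ l ∈ S, a l) • ∑ j ∈ S, x j =
      ∑ j, inclusionWeight a k j • x j := by
  simp_rw [inclusionWeight, sum_smul, smul_sum]
  exact sum_comm' fun S j => by simp [and_comm]

theorem norm_inv_smul_sum_sub_le {E : Type*} [SeminormedAddCommGroup E] [NormedSpace ℝ E]
    [Nonempty ι] (ha : ∀ j, 0 < a j) (hk : k ≤ Fintype.card ι) {δ K : ℝ}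
    (hδ : ∀ i j, |a i - a j| ≤ δ) (x : ι → E) (hx : ∀ j, ‖x j‖ ≤ K) :
    ‖(∑ S ∈ powersetCard k univ, ∏ l ∈ S, a l)⁻¹ •
          ∑ S ∈ powersetCard k univ, (∏ l ∈ S, a l) • ∑ j ∈ S, x j -
        (k : ℝ) • ((∑ j, a j)⁻¹ • ∑ j, a j • x j)‖
      ≤ K * δ * (k * (k - 1)) / ∑ j, a j := by
  set Z := ∑ S ∈ powersetCard k univ, ∏ l ∈ S, a l
  set W := ∑ j, a j
  set D := fun j => W * inclusionWeight a k j - k * a j * Z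
  have hZ : 0 < Z := sum_pos (fun S _ => prod_pos fun l _ => ha l) (powersetCard_nonempty.2 hk)
  have hW : 0 < W := sum_pos (fun j _ => ha j) univ_nonempty
  have hK : 0 ≤ K := (norm_nonneg _).trans (hx (Classical.arbitrary ι))
  have hvec : Z⁻¹ • ∑ S ∈ powersetCard k univ, (∏ l ∈ S, a l) • ∑ j ∈ S, x j -
      (k : ℝ) • (W⁻¹ • ∑ j, a j • x j) = (Z * W)⁻¹ • ∑ j, D j • x j := by
    rw [sum_smul_sum_eq_sum_inclusionWeight_smul, smul_sum, smul_sum, smul_sum, smul_sum,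
      ← sum_sub_distrib]
    refine sum_congr rfl fun j _ => ?_
    rw [smul_smul, smul_smul, smul_smul, smul_smul, ← sub_smul]
    congr 1
    field_simp
    ring
  calc _ = (Z * W)⁻¹ * ‖∑ j, D j • x j‖ := by
        rw [hvec, norm_smul, Real.norm_of_nonneg (by positivity)]
    _ ≤ (Z * W)⁻¹ * ((∑ j, |D j|) * K) := by
        gcongr
        rw [sum_mul]
        refine norm_sum_le_of_le univ fun j _ => ?_
        rw [norm_smul, Real.norm_eq_abs]
        exact mul_le_mul_of_nonneg_left (hx j) (abs_nonneg _)
    _ ≤ (Z * W)⁻¹ * ((δ * (k * (k - 1)) * Z) * K) := by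
        gcongr
        exact sum_abs_sum_mul_inclusionWeight_sub_le a k (fun j => (ha j).le) hδ
    _ = K * δ * (k * (k - 1)) / W := by
        field_simp

end KSubsets

section Event

variable {F : Type*} [NormedAddCommGroup F] [InnerProductSpace ℝ F] {ι : Type*} [Fintype ι]

noncomputable def multicastLogLik (x : ι → F) (Q : Finset ι) (β : F) : ℝ :=
  ∑ j ∈ Q, ⟪β, x j⟫ - Real.log (∑ S ∈ powersetCard #Q univ, Real.exp (∑ j ∈ S, ⟪β, x j⟫))

noncomputable def duplicationLogLik (x : ι → F) (Q : Finset ι) (β : F) : ℝ :=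
  ∑ j ∈ Q, ⟪β, x j⟫ - #Q * Real.log (∑ j, Real.exp ⟪β, x j⟫)

theorem exp_inner_mem_Icc {x : F} {K : ℝ} (hx : ‖x‖ ≤ K) (β : F) :
    Real.exp ⟪β, x⟫ ∈ Set.Icc (Real.exp (-(K * ‖β‖))) (Real.exp (K * ‖β‖)) := by
  have h : |⟪β, x⟫| ≤ K * ‖β‖ := (abs_real_inner_le_norm β x).trans (by rw [mul_comm]; gcongr)
  exact ⟨Real.exp_le_exp.2 (abs_le.1 h).1, Real.exp_le_exp.2 (abs_le.1 h).2⟩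

theorem exists_hasGradientAt_multicastLogLik_duplicationLogLik [CompleteSpace F] [Nonempty ι]
    (x : ι → F) (Q : Finset ι) {K : ℝ} (hx : ∀ j, ‖x j‖ ≤ K) (β : F) :
    ∃ g₁ g₂, HasGradientAt (multicastLogLik x Q) g₁ β ∧
      HasGradientAt (duplicationLogLik x Q) g₂ β ∧
      ‖g₁ - g₂‖ ≤ K * Real.exp (2 * K * ‖β‖) * (#Q * (#Q - 1)) / Fintype.card ι := by
  classical
  have hinner (v : F) : HasGradientAt (fun y => ⟪y, v⟫) v β := hasGradientAt_inner_const_right v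
  have hlinear := HasGradientAt.fun_sum (t := Q) fun j _ => hinner (x j)
  have hP : (powersetCard #Q (univ : Finset ι)).Nonempty := powersetCard_nonempty.2 (card_le_univ Q)
  have hexact := hlinear.sub (.log_sum_exp hP fun S _ => .fun_sum (t := S) fun j _ => hinner (x j))
  have happrox := hlinear.sub
    ((HasGradientAt.log_sum_exp univ_nonempty fun j _ => hinner (x j)).const_mul (#Q : ℝ))
  refine ⟨_, _, hexact, happrox, ?_⟩
  rw [sub_sub_sub_cancel_left, norm_sub_rev]
  simp_rw [Real.exp_sum]
  set r := K * ‖β‖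
  have ha := fun j => exp_inner_mem_Icc (hx j) β
  have hδ : ∀ i j, |Real.exp ⟪β, x i⟫ - Real.exp ⟪β, x j⟫| ≤ Real.exp r := fun i j =>
    abs_sub_le_iff.2 ⟨by linarith [Real.exp_pos ⟪β, x j⟫, (ha i).2],
      by linarith [Real.exp_pos ⟪β, x i⟫, (ha j).2]⟩
  have hW : Fintype.card ι * Real.exp (-r) ≤ ∑ j, Real.exp ⟪β, x j⟫ := by
    simpa using card_nsmul_le_sum univ _ _ fun j _ => (ha j).1
  have hK : 0 ≤ K := (norm_nonneg _).trans (hx (Classical.arbitrary ι))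
  have hk := natCast_mul_natCast_sub_one_nonneg #Q
  calc _ ≤ K * Real.exp r * (#Q * (#Q - 1)) / ∑ j, Real.exp ⟪β, x j⟫ :=
        norm_inv_smul_sum_sub_le _ _ (fun j => Real.exp_pos _) (card_le_univ Q) hδ x hx
    _ ≤ K * Real.exp r * (#Q * (#Q - 1)) / (Fintype.card ι * Real.exp (-r)) := by
        gcongr
    _ = K * Real.exp (2 * K * ‖β‖) * (#Q * (#Q - 1)) / Fintype.card ι := by
        rw [Real.exp_neg, show 2 * K * ‖β‖ = r + r by ring, Real.exp_add]
        field_simp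

end Event

theorem grad_logPL_approx_bound_general
    {p n : ℕ} (K : ℝ) (hK : 0 ≤ K)
    {J : Fin n → Type*} [∀ m, Fintype (J m)] [∀ m, Nonempty (J m)]
    (x : (m : Fin n) → J m → EuclideanSpace ℝ (Fin p))
    (hx : ∀ m j, ‖x m j‖ ≤ K)
    (Jm : (m : Fin n) → Finset (J m))
    (logPL logPLtilde : EuclideanSpace ℝ (Fin p) → ℝ)
    (hPL : logPL = fun β =>
      ∑ m, ((∑ j ∈ Jm m, ⟪β, x m j⟫) -
        Real.log (∑ S ∈ Finset.powersetCard (Jm m).card (Finset.univ : Finset (J m)),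
          Real.exp (∑ j ∈ S, ⟪β, x m j⟫))))
    (hPLt : logPLtilde = fun β =>
      ∑ m, ((∑ j ∈ Jm m, ⟪β, x m j⟫) -
        ((Jm m).card : ℝ) * Real.log (∑ j, Real.exp ⟪β, x m j⟫))) :
    ∀ β : EuclideanSpace ℝ (Fin p),
      DifferentiableAt ℝ logPL β ∧ DifferentiableAt ℝ logPLtilde β ∧
      ‖gradient logPL β - gradient logPLtilde β‖
        ≤ K * Real.exp (4 * K * ‖β‖) *
            ∑ m, ((Jm m).card : ℝ) ^ 2 * (((Jm m).card : ℝ) - 1)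
              / (Fintype.card (J m) : ℝ) := by
  intro β
  choose g₁ g₂ hg₁ hg₂ hbound using fun m =>
    exists_hasGradientAt_multicastLogLik_duplicationLogLik (x m) (Jm m) (hx m) β
  have hgradPL : HasGradientAt logPL (∑ m, g₁ m) β := hPL ▸ .fun_sum fun m _ => hg₁ m
  have hgradPLt : HasGradientAt logPLtilde (∑ m, g₂ m) β := hPLt ▸ .fun_sum fun m _ => hg₂ m
  refine ⟨hgradPL.differentiableAt, hgradPLt.differentiableAt, ?_⟩
  rw [hgradPL.gradient, hgradPLt.gradient, ← sum_sub_distrib, mul_sum]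
  refine (norm_sum_le _ _).trans (sum_le_sum fun m _ => (hbound m).trans ?_)
  have hk :
      ((Jm m).card : ℝ) * ((Jm m).card - 1) ≤ ((Jm m).card : ℝ) ^ 2 * ((Jm m).card - 1) := by
    nlinarith [mul_nonneg (Nat.cast_nonneg (Jm m).card) (sq_nonneg (((Jm m).card : ℝ) - 1))]
  have he : Real.exp (2 * K * ‖β‖) ≤ Real.exp (4 * K * ‖β‖) := by
    gcongr
    norm_num
  rw [mul_div_assoc]
  exact mul_le_mul (by gcongr) (div_le_div_of_nonneg_right hk (Nat.cast_nonneg _))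
    (div_nonneg (natCast_mul_natCast_sub_one_nonneg _) (Nat.cast_nonneg _)) (by positivity)

/-- With bounded covariates `‖x_m(j)‖ ≤ K`, the exact multicast log partial
likelihood and its duplication approximation are differentiable at every `β`,
and their gradients differ by at most
`K·exp(4K‖β‖)·Σ_m |J_m|²(|J_m|−1)/|𝒥_m|`. -/
theorem grad_logPL_approx_bound
    {p n : ℕ} (K : ℝ) (hK : 0 ≤ K)
    {J : Fin n → Type*} [∀ m, Fintype (J m)] [∀ m, Nonempty (J m)]
    (x : (m : Fin n) → J m → EuclideanSpace ℝ (Fin p))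
    (hx : ∀ m j, ‖x m j‖ ≤ K)
    (Jm : (m : Fin n) → Finset (J m)) (hJm : ∀ m, (Jm m).Nonempty)
    (logPL logPLtilde : EuclideanSpace ℝ (Fin p) → ℝ)
    (hPL : logPL = fun β =>
      ∑ m, ((∑ j ∈ Jm m, ⟪β, x m j⟫) -
        Real.log (∑ S ∈ Finset.powersetCard (Jm m).card (Finset.univ : Finset (J m)),
          Real.exp (∑ j ∈ S, ⟪β, x m j⟫))))
    (hPLt : logPLtilde = fun β =>
      ∑ m, ((∑ j ∈ Jm m, ⟪β, x m j⟫) -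
        ((Jm m).card : ℝ) * Real.log (∑ j, Real.exp ⟪β, x m j⟫))) :
    ∀ β : EuclideanSpace ℝ (Fin p),
      DifferentiableAt ℝ logPL β ∧ DifferentiableAt ℝ logPLtilde β ∧
      ‖gradient logPL β - gradient logPLtilde β‖
        ≤ K * Real.exp (4 * K * ‖β‖) *
            ∑ m, ((Jm m).card : ℝ) ^ 2 * (((Jm m).card : ℝ) - 1)
              / (Fintype.card (J m) : ℝ) :=
  grad_logPL_approx_bound_general K hK x hx Jm logPL logPLtilde hPL hPLt
end

section
/- For every β ∈ ℝ^p, both log PL and log P̃L are twice differentiable at β and the Hessian matrices (matrices of second partial derivatives) satisfy ‖∇²[log PL(β)] − ∇²[log P̃L(β)]‖ ≤ 2 K² · exp(4 K ‖β‖) · Σ_{m=1}^n |J_m|³ (|J_m| − 1) / |𝒥_m|, where ‖·‖ on matrices denotes the operator (spectral) norm. -/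
/-!
For one event with `k = |J_m|` recipients and weights `w_j = exp ⟪x_j, β⟫`, the Hessian of
`log Σ_S exp ⟪Σ_{j ∈ S} x_j, β⟫` in a direction `u` is the variance of `Σ_{j ∈ S} ⟪x_j, u⟫`
under the weights `∏_{j ∈ S} w_j` on `k`-subsets `S`, and the Hessian of `k · log Σ_j w_j` is
`k` times the variance of `⟪x_j, u⟫` under `w`. Draw an ordered `k`-tuple of receivers
independently with probabilities proportional to `w`: the variance of `Σ_i ⟪x_{t_i}, u⟫` is the
second quantity, and conditioning on the tuple being injective gives the first, since each
`k`-subset is the image of `k!` injective tuples of the same weight. Conditioning on an event of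
probability `1 - δ` changes the variance of a variable bounded by `M = k K ‖u‖` by at most
`4 M² δ`, and a collision has probability `δ ≤ (k choose 2) · max w / Σ w ≤
(k choose 2) · exp (2 K ‖β‖) / |𝒥_m|`. Finally, the Hessian difference is symmetric, so its
spectral norm is the supremum of its quadratic form over unit vectors.
-/

open scoped RealInnerProductSpace BigOperators

/-- The operator (spectral) norm of a real `p × p` matrix, i.e. the operator
norm of the associated linear map on Euclidean space. -/
noncomputable def matrixOpNorm {p : ℕ} (M : Matrix (Fin p) (Fin p) ℝ) : ℝ :=
  ‖LinearMap.toContinuousLinearMap (Matrix.toEuclideanLin M)‖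

/-- The Hessian matrix (matrix of second partial derivatives) of
`f : ℝ^p → ℝ` at `β`. -/
noncomputable def hessianMatrix {p : ℕ} (f : EuclideanSpace ℝ (Fin p) → ℝ)
    (β : EuclideanSpace ℝ (Fin p)) : Matrix (Fin p) (Fin p) ℝ :=
  Matrix.of fun i i' =>
    fderiv ℝ (fun b => fderiv ℝ f b (EuclideanSpace.single i' 1)) β
      (EuclideanSpace.single i 1)

open Finset
open scoped Nat

noncomputable def weightedVar {ι : Type*} (s : Finset ι) (w y : ι → ℝ) : ℝ :=
  s.centerMass w (fun i => y i ^ 2) - s.centerMass w y ^ 2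

section WeightedVar

variable {ι : Type*} {s t : Finset ι} {w y : ι → ℝ}

lemma weightedVar_eq_centerMass_sub_sq (hs : ∑ i ∈ s, w i ≠ 0) (c : ℝ) :
    weightedVar s w y
      = s.centerMass w (fun i => (y i - c) ^ 2) - (s.centerMass w y - c) ^ 2 := by
  have hexpand : ∑ i ∈ s, w i * (y i - c) ^ 2
      = ∑ i ∈ s, w i * y i ^ 2 - 2 * c * ∑ i ∈ s, w i * y i + c ^ 2 * ∑ i ∈ s, w i := by
    simp only [mul_sum, ← sum_sub_distrib, ← sum_add_distrib]
    exact sum_congr rfl fun _ _ => by ring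
  simp only [weightedVar, centerMass, smul_eq_mul, hexpand]
  field_simp
  ring

lemma weightedVar_le_centerMass_sub_sq (hs : ∑ i ∈ s, w i ≠ 0) (c : ℝ) :
    weightedVar s w y ≤ s.centerMass w (fun i => (y i - c) ^ 2) := by
  rw [weightedVar_eq_centerMass_sub_sq hs c]
  exact sub_le_self _ (sq_nonneg _)

lemma weightedVar_eq_centerMass_sub_centerMass_sq (hs : ∑ i ∈ s, w i ≠ 0) :
    weightedVar s w y = s.centerMass w (fun i => (y i - s.centerMass w y) ^ 2) := by
  simp [weightedVar_eq_centerMass_sub_sq hs (s.centerMass w y)]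

lemma abs_centerMass_le (hw : ∀ i ∈ s, 0 ≤ w i) (hs : 0 < ∑ i ∈ s, w i) {M : ℝ}
    (hy : ∀ i ∈ s, |y i| ≤ M) : |s.centerMass w y| ≤ M :=
  abs_le.2 ((convex_Icc (-M) M).centerMass_mem hw hs fun i hi => abs_le.1 (hy i hi))

lemma sum_mul_mem_Icc {r : Finset ι} {g : ι → ℝ} {B : ℝ} (hw : ∀ i ∈ r, 0 ≤ w i)
    (hg : ∀ i ∈ r, g i ∈ Set.Icc 0 B) :
    ∑ i ∈ r, w i * g i ∈ Set.Icc 0 (B * ∑ i ∈ r, w i) := by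
  rw [mul_sum]
  exact ⟨sum_nonneg fun i hi => mul_nonneg (hw i hi) (hg i hi).1,
    sum_le_sum fun i hi => by nlinarith [hw i hi, (hg i hi).2]⟩

lemma abs_centerMass_sub_centerMass_le [DecidableEq ι] (hst : s ⊆ t) (hw : ∀ i ∈ t, 0 ≤ w i)
    (hs : 0 < ∑ i ∈ s, w i) {g : ι → ℝ} {B : ℝ} (hg : ∀ i ∈ t, g i ∈ Set.Icc 0 B) :
    |s.centerMass w g - t.centerMass w g|
      ≤ B * ((∑ i ∈ t \ s, w i) / ∑ i ∈ t, w i) := by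
  obtain ⟨hGs0, hGs⟩ := sum_mul_mem_Icc (fun i hi => hw i (hst hi)) fun i hi => hg i (hst hi)
  obtain ⟨hGc0, hGc⟩ := sum_mul_mem_Icc (r := t \ s) (fun i hi => hw i (sdiff_subset hi))
    fun i hi => hg i (sdiff_subset hi)
  have hWc : 0 ≤ ∑ i ∈ t \ s, w i := sum_nonneg fun i hi => hw i (sdiff_subset hi)
  simp only [centerMass, smul_eq_mul, ← sum_sdiff hst]
  set Ws := ∑ i ∈ s, w i
  set Wc := ∑ i ∈ t \ s, w i
  set Gs := ∑ i ∈ s, w i * g i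
  set Gc := ∑ i ∈ t \ s, w i * g i
  have hden : 0 < Ws * (Wc + Ws) := by positivity
  have hdiff : Ws⁻¹ * Gs - (Wc + Ws)⁻¹ * (Gc + Gs)
      = (Gs * Wc - Gc * Ws) / (Ws * (Wc + Ws)) := by
    field_simp
    ring
  have hbound : B * (Wc / (Wc + Ws)) = B * Wc * Ws / (Ws * (Wc + Ws)) := by
    field_simp
  rw [hdiff, hbound, abs_div, abs_of_pos hden, div_le_div_iff_of_pos_right hden, abs_le]
  constructor <;> nlinarith [mul_le_mul_of_nonneg_right hGs hWc,
    mul_le_mul_of_nonneg_right hGc hs.le, mul_nonneg hGs0 hWc, mul_nonneg hGc0 hs.le]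

theorem abs_weightedVar_sub_weightedVar_le [DecidableEq ι] (hst : s ⊆ t)
    (hw : ∀ i ∈ t, 0 ≤ w i) (hs : 0 < ∑ i ∈ s, w i) {M : ℝ} (hy : ∀ i ∈ t, |y i| ≤ M) :
    |weightedVar s w y - weightedVar t w y|
      ≤ 4 * M ^ 2 * ((∑ i ∈ t \ s, w i) / ∑ i ∈ t, w i) := by
  have ht : 0 < ∑ i ∈ t, w i :=
    hs.trans_le (sum_le_sum_of_subset_of_nonneg hst fun i hi _ => hw i hi)
  have hsq : ∀ c, |c| ≤ M → ∀ i ∈ t, (y i - c) ^ 2 ∈ Set.Icc 0 (4 * M ^ 2) := fun c hc i hi =>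
    ⟨sq_nonneg _, by nlinarith [abs_le.1 hc, abs_le.1 (hy i hi)]⟩
  have hcs := abs_centerMass_le (fun i hi => hw i (hst hi)) hs fun i hi => hy i (hst hi)
  have hct := abs_centerMass_le hw ht hy
  -- compare each variance with the second moment about the other set's mean
  have hs_le := weightedVar_le_centerMass_sub_sq (y := y) hs.ne' (t.centerMass w y)
  have ht_le := weightedVar_le_centerMass_sub_sq (y := y) ht.ne' (s.centerMass w y)
  have hs_eq := weightedVar_eq_centerMass_sub_centerMass_sq (y := y) hs.ne'
  have ht_eq := weightedVar_eq_centerMass_sub_centerMass_sq (y := y) ht.ne'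
  have h₁ := abs_le.1 (abs_centerMass_sub_centerMass_le hst hw hs (hsq _ hct))
  have h₂ := abs_le.1 (abs_centerMass_sub_centerMass_le hst hw hs (hsq _ hcs))
  rw [abs_sub_le_iff]
  constructor <;> linarith [h₁.2, h₂.1]

end WeightedVar

section Tuples
variable {α β : Type*} [Fintype α] [Fintype β]

lemma weightedVar_univ_comp_equiv (e : α ≃ β) (w y : β → ℝ) :
    weightedVar univ (fun a => w (e a)) (fun a => y (e a)) = weightedVar univ w y := by
  simp only [weightedVar, centerMass, e.sum_comp (fun b => w b),
    e.sum_comp (fun b => w b • y b), e.sum_comp (fun b => w b • y b ^ 2)]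

lemma weightedVar_univ_prod {w₁ y₁ : α → ℝ} {w₂ y₂ : β → ℝ} (h₁ : ∑ a, w₁ a ≠ 0)
    (h₂ : ∑ b, w₂ b ≠ 0) :
    weightedVar univ (fun q : α × β => w₁ q.1 * w₂ q.2) (fun q => y₁ q.1 + y₂ q.2)
      = weightedVar univ w₁ y₁ + weightedVar univ w₂ y₂ := by
  have hfac : ∀ (F : α → ℝ) (G : β → ℝ),
      ∑ q : α × β, w₁ q.1 * w₂ q.2 * (F q.1 * G q.2)
        = (∑ a, w₁ a * F a) * ∑ b, w₂ b * G b := by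
    intro F G
    rw [Fintype.sum_prod_type, sum_mul_sum]
    exact sum_congr rfl fun _ _ => sum_congr rfl fun _ _ => by ring
  have e₀ := hfac 1 1
  have e₁ := hfac y₁ 1
  have e₂ := hfac 1 y₂
  have e₁₁ := hfac (y₁ ^ 2) 1
  have e₁₂ := hfac y₁ y₂
  have e₂₂ := hfac 1 (y₂ ^ 2)
  simp only [Pi.one_apply, Pi.pow_apply, mul_one, one_mul] at e₀ e₁ e₂ e₁₁ e₁₂ e₂₂
  have hlin : ∑ q : α × β, w₁ q.1 * w₂ q.2 * (y₁ q.1 + y₂ q.2)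
      = ∑ q : α × β, w₁ q.1 * w₂ q.2 * y₁ q.1 + ∑ q : α × β, w₁ q.1 * w₂ q.2 * y₂ q.2 := by
    rw [← sum_add_distrib]
    exact sum_congr rfl fun _ _ => by ring
  have hquad : ∑ q : α × β, w₁ q.1 * w₂ q.2 * (y₁ q.1 + y₂ q.2) ^ 2
      = ∑ q : α × β, w₁ q.1 * w₂ q.2 * y₁ q.1 ^ 2
        + 2 * ∑ q : α × β, w₁ q.1 * w₂ q.2 * (y₁ q.1 * y₂ q.2)
        + ∑ q : α × β, w₁ q.1 * w₂ q.2 * y₂ q.2 ^ 2 := by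
    rw [mul_sum, ← sum_add_distrib, ← sum_add_distrib]
    exact sum_congr rfl fun _ _ => by ring
  simp only [weightedVar, centerMass, smul_eq_mul, hlin, hquad, e₀, e₁, e₂, e₁₁, e₁₂, e₂₂]
  field_simp
  ring

lemma weightedVar_univ_pi_fin {ι : Type*} [Fintype ι] (w y : ι → ℝ) (hw : ∑ i, w i ≠ 0)
    (k : ℕ) :
    weightedVar univ (fun t : Fin k → ι => ∏ i, w (t i)) (fun t => ∑ i, y (t i))
      = k * weightedVar univ w y := by
  induction k with
  | zero => simp [weightedVar, centerMass]
  | succ k ih =>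
    rw [← weightedVar_univ_comp_equiv (Fin.consEquiv fun _ => ι)]
    simp only [Fin.consEquiv_apply, Fin.prod_univ_succ, Fin.sum_univ_succ, Fin.cons_zero,
      Fin.cons_succ]
    rw [weightedVar_univ_prod (w₂ := fun s : Fin k → ι => ∏ i, w (s i))
      (y₂ := fun s => ∑ i, y (s i)) hw (by rw [← Fintype.sum_pow]; exact pow_ne_zero k hw), ih]
    push_cast
    ring

end Tuples

section Subsets
variable {ι : Type*} [Fintype ι] [DecidableEq ι]

lemma card_filter_injective_image_eq_s14 {k : ℕ} {S : Finset ι} (hS : #S = k) :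
    #{t : Fin k → ι | Function.Injective t ∧ univ.image t = S} = k ! := by
  set coe : (Fin k ↪ S) → Fin k → ι := fun e i => e i
  have hcoe : Function.Injective coe := fun e e' h =>
    Function.Embedding.ext fun i => Subtype.ext (congrFun h i)
  have himage : ({t | Function.Injective t ∧ univ.image t = S} : Finset (Fin k → ι))
      = univ.image coe := by
    ext t
    simp only [mem_filter, mem_univ, true_and, mem_image]
    constructor
    · rintro ⟨ht, rfl⟩
      exact ⟨⟨fun i => ⟨t i, mem_image_of_mem t (mem_univ i)⟩,
        fun i j h => ht (congrArg Subtype.val h)⟩, rfl⟩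
    · rintro ⟨e, rfl⟩
      have hinj : Function.Injective (coe e) := Subtype.val_injective.comp e.injective
      refine ⟨hinj, eq_of_subset_of_card_le (fun j hj => ?_) ?_⟩
      · obtain ⟨i, -, rfl⟩ := mem_image.1 hj
        exact (e i).2
      · rw [card_image_of_injective _ hinj, card_univ, Fintype.card_fin, hS]
  rw [himage, card_image_of_injective _ hcoe, card_univ, Fintype.card_embedding_eq,
    Fintype.card_coe, Fintype.card_fin, hS, Nat.descFactorial_self]

lemma sum_injective_eq_factorial_mul_sum_powersetCard (k : ℕ) (F : Finset ι → ℝ) :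
    ∑ t : Fin k → ι with Function.Injective t, F (univ.image t)
      = k ! * ∑ S ∈ powersetCard k univ, F S := by
  have hmaps : ∀ t ∈ ({t | Function.Injective t} : Finset (Fin k → ι)),
      univ.image t ∈ powersetCard k univ := fun t ht => mem_powersetCard.2
    ⟨subset_univ _, by
      rw [card_image_of_injective _ (mem_filter.1 ht).2, card_univ, Fintype.card_fin]⟩
  rw [← sum_fiberwise_of_maps_to hmaps, mul_sum]
  refine sum_congr rfl fun S hS => ?_
  rw [sum_congr rfl fun t ht => by rw [(mem_filter.1 ht).2], sum_const, filter_filter,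
    card_filter_injective_image_eq_s14 (mem_powersetCard.1 hS).2, nsmul_eq_mul]

lemma weightedVar_powersetCard_eq_injective (w y : ι → ℝ) (k : ℕ) :
    weightedVar (powersetCard k univ) (fun S => ∏ i ∈ S, w i) (fun S => ∑ i ∈ S, y i)
      = weightedVar {t : Fin k → ι | Function.Injective t} (fun t => ∏ i, w (t i))
          (fun t => ∑ i, y (t i)) := by
  have key : ∀ F : ℝ → ℝ → ℝ,
      ∑ t : Fin k → ι with Function.Injective t, F (∏ i, w (t i)) (∑ i, y (t i))
        = k ! * ∑ S ∈ powersetCard k univ, F (∏ i ∈ S, w i) (∑ i ∈ S, y i) := by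
    intro F
    rw [← sum_injective_eq_factorial_mul_sum_powersetCard]
    refine sum_congr rfl fun t ht => ?_
    have ht := (mem_filter.1 ht).2
    rw [prod_image fun i _ j _ h => ht h, sum_image fun i _ j _ h => ht h]
  have k₀ := key fun W _ => W
  have k₁ := key fun W Y => W • Y
  have k₂ := key fun W Y => W • Y ^ 2
  have : (k ! : ℝ) ≠ 0 := by positivity
  simp only [weightedVar, centerMass]
  rw [k₀, k₁, k₂]
  simp only [smul_eq_mul]
  field_simp

end Subsets

section Collisions
variable {ι : Type*} [DecidableEq ι] {w : ι → ℝ} {a : ℝ}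

lemma sum_image_le_card_mul (hw : ∀ i, 0 ≤ w i) (ha : ∀ i, w i ≤ a) {k : ℕ} (s : Fin k → ι) :
    ∑ j ∈ univ.image s, w j ≤ k * a :=
  calc ∑ j ∈ univ.image s, w j ≤ ∑ i, w (s i) := sum_image_le_of_nonneg fun j _ => hw j
    _ ≤ ∑ _i : Fin k, a := sum_le_sum fun i _ => ha (s i)
    _ = k * a := by simp

variable [Fintype ι]

lemma sum_prod_not_injective_succ_le (hw : ∀ i, 0 ≤ w i) (ha : ∀ i, w i ≤ a) (k : ℕ) :
    ∑ t : Fin (k + 1) → ι with ¬ Function.Injective t, ∏ i, w (t i)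
      ≤ (∑ j, w j) * ∑ s : Fin k → ι with ¬ Function.Injective s, ∏ i, w (s i)
        + k * a * (∑ j, w j) ^ k := by
  have hcons : ∀ q, (Fin.consEquiv (n := k) fun _ => ι) q = Fin.cons q.1 q.2 := fun _ => rfl
  rw [sum_filter, sum_filter, ← (Fin.consEquiv fun _ => ι).sum_comp, Fintype.sum_prod_type]
  simp only [hcons, Fin.prod_univ_succ, Fin.cons_zero, Fin.cons_succ,
    Fin.cons_injective_iff, not_and_or, not_not]
  have hW : ∀ s : Fin k → ι, 0 ≤ ∏ i, w (s i) := fun s => prod_nonneg fun i _ => hw _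
  have hpt : ∀ j (s : Fin k → ι),
      (if j ∈ Set.range s ∨ ¬ Function.Injective s then w j * ∏ i, w (s i) else 0)
        ≤ w j * (if ¬ Function.Injective s then ∏ i, w (s i) else 0)
          + (if j ∈ univ.image s then w j else 0) * ∏ i, w (s i) := by
    intro j s
    have hmem : j ∈ univ.image s ↔ j ∈ Set.range s := by simp
    by_cases hQ : Function.Injective s <;> by_cases hP : j ∈ Set.range s <;>
      simp [hQ, hP, hmem, mul_nonneg (hw j) (hW s)]
  calc _ ≤ ∑ j, ∑ s : Fin k → ι, (w j * (if ¬ Function.Injective s then ∏ i, w (s i) else 0)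
          + (if j ∈ univ.image s then w j else 0) * ∏ i, w (s i)) :=
        sum_le_sum fun j _ => sum_le_sum fun s _ => hpt j s
    _ = (∑ j, w j) * (∑ s : Fin k → ι, if ¬ Function.Injective s then ∏ i, w (s i) else 0)
          + ∑ s : Fin k → ι, (∑ j ∈ univ.image s, w j) * ∏ i, w (s i) := by
        simp only [sum_add_distrib, ← mul_sum, ← sum_mul]
        rw [sum_comm]
        simp only [← sum_mul, sum_ite_mem, univ_inter]
    _ ≤ (∑ j, w j) * (∑ s : Fin k → ι, if ¬ Function.Injective s then ∏ i, w (s i) else 0)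
          + ∑ s : Fin k → ι, (k * a) * ∏ i, w (s i) := by
        gcongr with s
        exacts [hW s, sum_image_le_card_mul hw ha s]
    _ = _ := by rw [← mul_sum, ← Fintype.sum_pow]

theorem sum_prod_not_injective_mul_le (hw : ∀ i, 0 ≤ w i) (ha : ∀ i, w i ≤ a) (k : ℕ) :
    (∑ t : Fin k → ι with ¬ Function.Injective t, ∏ i, w (t i)) * ∑ j, w j
      ≤ k * (k - 1) / 2 * a * (∑ j, w j) ^ k := by
  induction k with
  | zero => simp [Function.injective_of_subsingleton]
  | succ k ih =>
    set S := ∑ j, w j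
    set N := ∑ t : Fin k → ι with ¬ Function.Injective t, ∏ i, w (t i)
    have hS : 0 ≤ S := sum_nonneg fun j _ => hw j
    calc _ ≤ (S * N + k * a * S ^ k) * S :=
          mul_le_mul_of_nonneg_right (sum_prod_not_injective_succ_le hw ha k) hS
      _ = S * (N * S) + k * a * S ^ (k + 1) := by ring
      _ ≤ S * (k * (k - 1) / 2 * a * S ^ k) + k * a * S ^ (k + 1) := by gcongr
      _ = _ := by push_cast; ring

end Collisions

lemma natCast_pow_three_mul_sub_one_nonneg (k : ℕ) : (0 : ℝ) ≤ k ^ 3 * (k - 1) := by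
  rcases Nat.eq_zero_or_pos k with rfl | hk
  · simp
  · exact mul_nonneg (by positivity) (sub_nonneg.2 (by exact_mod_cast hk))

section Event

variable {ι : Type*} [Fintype ι] [DecidableEq ι] [Nonempty ι]

theorem abs_weightedVar_powersetCard_sub_le {w y : ι → ℝ} (hw : ∀ i, 0 < w i) {a M : ℝ}
    (ha : ∀ i, w i ≤ a) (hy : ∀ i, |y i| ≤ M) {k : ℕ} (hk : k ≤ Fintype.card ι) :
    |weightedVar (powersetCard k univ) (fun S => ∏ i ∈ S, w i) (fun S => ∑ i ∈ S, y i)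
        - k * weightedVar univ w y|
      ≤ 2 * (k ^ 3 * (k - 1)) * M ^ 2 * (a / ∑ i, w i) := by
  have hS : 0 < ∑ i, w i := sum_pos (fun i _ => hw i) univ_nonempty
  have hW : ∀ t : Fin k → ι, 0 < ∏ i, w (t i) := fun t => prod_pos fun i _ => hw _
  have hInj : 0 < ∑ t : Fin k → ι with Function.Injective t, ∏ i, w (t i) := by
    obtain ⟨e⟩ :=
      Function.Embedding.nonempty_of_card_le (α := Fin k) (β := ι) (by simpa using hk)
    exact sum_pos (fun t _ => hW t) ⟨e, mem_filter.2 ⟨mem_univ _, e.injective⟩⟩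
  have hY : ∀ t ∈ (univ : Finset (Fin k → ι)), |∑ i, y (t i)| ≤ k * M := fun t _ =>
    (abs_sum_le_sum_abs _ _).trans
      (by simpa using sum_le_sum fun i (_ : i ∈ univ) => hy (t i))
  have hcompl : univ \ ({t | Function.Injective t} : Finset (Fin k → ι))
      = ({t | ¬ Function.Injective t} : Finset (Fin k → ι)) := by
    ext
    simp
  have hcoll := sum_prod_not_injective_mul_le (fun i => (hw i).le) ha k
  rw [weightedVar_powersetCard_eq_injective, ← weightedVar_univ_pi_fin w y hS.ne']
  refine (abs_weightedVar_sub_weightedVar_le (subset_univ _) (fun t _ => (hW t).le) hInj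
    hY).trans ?_
  rw [hcompl, ← Fintype.sum_pow]
  set N := ∑ t : Fin k → ι with ¬ Function.Injective t, ∏ i, w (t i)
  set S := ∑ i, w i
  have hratio : N / S ^ k ≤ k * (k - 1) / 2 * (a / S) := by
    rw [div_le_iff₀ (pow_pos hS k), ← sub_nonneg]
    have hrw : k * (k - 1) / 2 * (a / S) * S ^ k - N
        = (k * (k - 1) / 2 * a * S ^ k - N * S) / S := by
      field_simp
    rw [hrw]
    exact div_nonneg (by linarith) hS.le
  calc _ ≤ 4 * (k * M) ^ 2 * (k * (k - 1) / 2 * (a / S)) := by gcongr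
    _ = _ := by ring

variable {E : Type*} [NormedAddCommGroup E] [InnerProductSpace ℝ E]

theorem abs_weightedVar_exp_inner_sub_le {x : ι → E} {K : ℝ} (hx : ∀ i, ‖x i‖ ≤ K) {k : ℕ}
    (hk : k ≤ Fintype.card ι) (β u : E) :
    |k * weightedVar univ (fun i => Real.exp ⟪x i, β⟫) (fun i => ⟪x i, u⟫)
        - weightedVar (powersetCard k univ) (fun S => Real.exp ⟪∑ i ∈ S, x i, β⟫)
            (fun S => ⟪∑ i ∈ S, x i, u⟫)|
      ≤ 2 * K ^ 2 * Real.exp (4 * K * ‖β‖) * (k ^ 3 * (k - 1) / Fintype.card ι) * ‖u‖ ^ 2 := by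
  have hK : 0 ≤ K := (norm_nonneg _).trans (hx (Classical.arbitrary ι))
  have hinner : ∀ i, |⟪x i, β⟫| ≤ K * ‖β‖ := fun i =>
    (abs_real_inner_le_norm _ _).trans (mul_le_mul_of_nonneg_right (hx i) (norm_nonneg _))
  have hy : ∀ i, |⟪x i, u⟫| ≤ K * ‖u‖ := fun i =>
    (abs_real_inner_le_norm _ _).trans (mul_le_mul_of_nonneg_right (hx i) (norm_nonneg _))
  have hw_le : ∀ i, Real.exp ⟪x i, β⟫ ≤ Real.exp (K * ‖β‖) := fun i =>
    Real.exp_le_exp.2 (abs_le.1 (hinner i)).2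
  have hS : Fintype.card ι * Real.exp (-(K * ‖β‖)) ≤ ∑ i, Real.exp ⟪x i, β⟫ := by
    simpa using sum_le_sum fun i (_ : i ∈ univ) => Real.exp_le_exp.2 (abs_le.1 (hinner i)).1
  have hN : (0 : ℝ) < Fintype.card ι := by exact_mod_cast Fintype.card_pos
  have hratio : Real.exp (K * ‖β‖) / ∑ i, Real.exp ⟪x i, β⟫
      ≤ Real.exp (4 * K * ‖β‖) / Fintype.card ι := by
    calc _ ≤ Real.exp (K * ‖β‖) / (Fintype.card ι * Real.exp (-(K * ‖β‖))) :=
          div_le_div_of_nonneg_left (by positivity) (by positivity) hS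
      _ = Real.exp (K * ‖β‖ + K * ‖β‖) / Fintype.card ι := by
          rw [Real.exp_neg, Real.exp_add]
          field_simp
      _ ≤ _ := by gcongr; nlinarith [mul_nonneg hK (norm_nonneg β)]
  simp only [sum_inner, Real.exp_sum]
  rw [abs_sub_comm]
  have hc : 0 ≤ 2 * ((k : ℝ) ^ 3 * (k - 1)) * (K * ‖u‖) ^ 2 :=
    mul_nonneg (mul_nonneg zero_le_two (natCast_pow_three_mul_sub_one_nonneg k)) (sq_nonneg _)
  calc _ ≤ 2 * (k ^ 3 * (k - 1)) * (K * ‖u‖) ^ 2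
        * (Real.exp (K * ‖β‖) / ∑ i, Real.exp ⟪x i, β⟫) :=
        abs_weightedVar_powersetCard_sub_le (fun i => Real.exp_pos _) hw_le hy hk
    _ ≤ 2 * (k ^ 3 * (k - 1)) * (K * ‖u‖) ^ 2 * (Real.exp (4 * K * ‖β‖) / Fintype.card ι) :=
        mul_le_mul_of_nonneg_left hratio hc
    _ = _ := by ring

end Event

lemma fderiv_fderiv_apply {𝕜 E F : Type*} [NontriviallyNormedField 𝕜] [NormedAddCommGroup E]
    [NormedSpace 𝕜 E] [NormedAddCommGroup F] [NormedSpace 𝕜 F] {f : E → F} {x : E}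
    (hf : DifferentiableAt 𝕜 (fderiv 𝕜 f) x) (u v : E) :
    fderiv 𝕜 (fderiv 𝕜 f) x u v = fderiv 𝕜 (fun y => fderiv 𝕜 f y v) x u := by
  simp [fderiv_clm_apply hf (differentiableAt_const v)]

section LogSumExp

variable {E : Type*} [NormedAddCommGroup E] [InnerProductSpace ℝ E] {σ : Type*}

noncomputable def logSumExp (A : Finset σ) (V : σ → E) (b : E) : ℝ :=
  Real.log (∑ s ∈ A, Real.exp ⟪V s, b⟫)

variable {A : Finset σ} (V : σ → E)

lemma hasFDerivAt_sum_exp_inner_mul (A : Finset σ) (c : σ → ℝ) (b : E) :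
    HasFDerivAt (fun b => ∑ s ∈ A, Real.exp ⟪V s, b⟫ * c s)
      (∑ s ∈ A, c s • Real.exp ⟪V s, b⟫ • innerSL ℝ (V s)) b :=
  HasFDerivAt.fun_sum fun s _ => ((innerSL ℝ (V s)).hasFDerivAt.exp).mul_const (c s)

lemma sum_exp_inner_pos (hA : A.Nonempty) (b : E) : 0 < ∑ s ∈ A, Real.exp ⟪V s, b⟫ :=
  sum_pos (fun _ _ => Real.exp_pos _) hA

lemma contDiff_logSumExp (hA : A.Nonempty) {n : WithTop ℕ∞} : ContDiff ℝ n (logSumExp A V) :=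
  ContDiff.log (ContDiff.sum fun _ _ => (contDiff_const.inner ℝ contDiff_id).exp)
    fun b => (sum_exp_inner_pos V hA b).ne'

lemma fderiv_logSumExp_apply (hA : A.Nonempty) (b u : E) :
    fderiv ℝ (logSumExp A V) b u
      = (∑ s ∈ A, Real.exp ⟪V s, b⟫ * ⟪V s, u⟫) / ∑ s ∈ A, Real.exp ⟪V s, b⟫ := by
  have hZ : HasFDerivAt (fun b => ∑ s ∈ A, Real.exp ⟪V s, b⟫)
      (∑ s ∈ A, Real.exp ⟪V s, b⟫ • innerSL ℝ (V s)) b := by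
    simpa using hasFDerivAt_sum_exp_inner_mul V A 1 b
  unfold logSumExp
  rw [(hZ.log (sum_exp_inner_pos V hA b).ne').fderiv]
  simp [_root_.sum_apply, div_eq_inv_mul]


lemma iteratedFDeriv_two_logSumExp_apply (hA : A.Nonempty) (β u : E) :
    iteratedFDeriv ℝ 2 (logSumExp A V) β ![u, u]
      = weightedVar A (fun s => Real.exp ⟪V s, β⟫) (fun s => ⟪V s, u⟫) := by
  have hD : Differentiable ℝ (fderiv ℝ (logSumExp A V)) :=
    ((contDiff_logSumExp V hA (n := 2)).fderiv_right le_rfl).differentiable one_ne_zero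
  have hZ : HasFDerivAt (fun b => ∑ s ∈ A, Real.exp ⟪V s, b⟫)
      (∑ s ∈ A, Real.exp ⟪V s, β⟫ • innerSL ℝ (V s)) β := by
    simpa using hasFDerivAt_sum_exp_inner_mul V A 1 β
  have hN := hasFDerivAt_sum_exp_inner_mul V A (fun s => ⟪V s, u⟫) β
  have hZinv : HasFDerivAt (fun b => (∑ s ∈ A, Real.exp ⟪V s, b⟫)⁻¹) _ β :=
    (hasDerivAt_inv (sum_exp_inner_pos V hA β).ne').comp_hasFDerivAt β hZ
  have hfun : (fun b => fderiv ℝ (logSumExp A V) b u)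
      = fun b => (∑ s ∈ A, Real.exp ⟪V s, b⟫ * ⟪V s, u⟫)
          * (∑ s ∈ A, Real.exp ⟪V s, b⟫)⁻¹ := by
    funext b
    rw [fderiv_logSumExp_apply V hA, div_eq_mul_inv]
  rw [iteratedFDeriv_two_apply, Matrix.cons_val_zero, Matrix.cons_val_one, Matrix.cons_val_zero,
    fderiv_fderiv_apply (hD β), hfun, (hN.fun_mul hZinv).fderiv]
  have hsq : ∑ s ∈ A, ⟪V s, u⟫ * (Real.exp ⟪V s, β⟫ * ⟪V s, u⟫)
      = ∑ s ∈ A, Real.exp ⟪V s, β⟫ * ⟪V s, u⟫ ^ 2 := sum_congr rfl fun _ _ => by ring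
  simp [_root_.sum_apply, weightedVar, centerMass, hsq]
  ring

lemma iteratedFDeriv_two_mul_logSumExp_sub_logSumExp_apply {τ : Type*} {B : Finset τ}
    (W : τ → E) (c : ℝ) (hA : A.Nonempty) (hB : B.Nonempty) (β u : E) :
    iteratedFDeriv ℝ 2 (fun b => c * logSumExp A V b - logSumExp B W b) β ![u, u]
      = c * weightedVar A (fun s => Real.exp ⟪V s, β⟫) (fun s => ⟪V s, u⟫)
        - weightedVar B (fun s => Real.exp ⟪W s, β⟫) (fun s => ⟪W s, u⟫) := by
  have hsmul : (fun b => c * logSumExp A V b) = fun b => c • logSumExp A V b := rfl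
  rw [fun_iteratedFDeriv_sub_apply (contDiff_const.mul (contDiff_logSumExp V hA)).contDiffAt
    (contDiff_logSumExp W hB).contDiffAt, hsmul,
    iteratedFDeriv_const_smul_apply' (contDiff_logSumExp V hA).contDiffAt,
    sub_apply, smul_apply, smul_eq_mul,
    iteratedFDeriv_two_logSumExp_apply V hA, iteratedFDeriv_two_logSumExp_apply W hB]

end LogSumExp

section HessianMatrix

variable {p : ℕ}

lemma matrixOpNorm_le_of_isSymmetric {M : Matrix (Fin p) (Fin p) ℝ} {C : ℝ} (hC : 0 ≤ C)
    (hM : (Matrix.toEuclideanLin M).IsSymmetric)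
    (h : ∀ u, |⟪Matrix.toEuclideanLin M u, u⟫| ≤ C * ‖u‖ ^ 2) : matrixOpNorm M ≤ C := by
  rw [matrixOpNorm, ContinuousLinearMap.norm_eq_iSup_rayleighQuotient _ hM]
  refine ciSup_le fun u => ?_
  rcases eq_or_ne u 0 with rfl | hu
  · simpa using hC
  · have hu' : 0 < ‖u‖ ^ 2 := pow_pos (norm_pos_iff.2 hu) 2
    simpa [ContinuousLinearMap.reApplyInnerSelf_apply, abs_div, div_le_iff₀ hu'] using h u

lemma inner_toEuclideanLin_hessianMatrix {f : EuclideanSpace ℝ (Fin p) → ℝ}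
    {β : EuclideanSpace ℝ (Fin p)} (hf : DifferentiableAt ℝ (fderiv ℝ f) β)
    (u v : EuclideanSpace ℝ (Fin p)) :
    ⟪u, Matrix.toEuclideanLin (hessianMatrix f β) v⟫ = fderiv ℝ (fderiv ℝ f) β u v := by
  conv_rhs => rw [← (EuclideanSpace.basisFun (Fin p) ℝ).sum_repr u,
    ← (EuclideanSpace.basisFun (Fin p) ℝ).sum_repr v]
  simp [hessianMatrix, fderiv_fderiv_apply hf, Matrix.toLpLin_apply, Matrix.mulVec, dotProduct,
    PiLp.inner_apply, mul_sum]
  simp_rw [sum_mul]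
  rw [sum_comm]
  exact sum_congr rfl fun _ _ => sum_congr rfl fun _ _ => by ring

theorem matrixOpNorm_hessianMatrix_sub_le {f g : EuclideanSpace ℝ (Fin p) → ℝ}
    {β : EuclideanSpace ℝ (Fin p)} (hf : ContDiffAt ℝ 2 f β) (hg : ContDiffAt ℝ 2 g β) {C : ℝ}
    (hC : 0 ≤ C) (h : ∀ u, |iteratedFDeriv ℝ 2 (f - g) β ![u, u]| ≤ C * ‖u‖ ^ 2) :
    matrixOpNorm (hessianMatrix f β - hessianMatrix g β) ≤ C := by
  have hD2 {F : EuclideanSpace ℝ (Fin p) → ℝ} (hF : ContDiffAt ℝ 2 F β) :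
      DifferentiableAt ℝ (fderiv ℝ F) β :=
    (hF.fderiv_right (m := 1) le_rfl).differentiableAt one_ne_zero
  have hinner : ∀ u v, ⟪u, Matrix.toEuclideanLin (hessianMatrix f β - hessianMatrix g β) v⟫
      = fderiv ℝ (fderiv ℝ (f - g)) β u v := by
    intro u v
    rw [map_sub, LinearMap.sub_apply, inner_sub_right, inner_toEuclideanLin_hessianMatrix (hD2 hf),
      inner_toEuclideanLin_hessianMatrix (hD2 hg)]
    have := congrArg (fun T => T ![u, v]) (iteratedFDeriv_sub_apply (i := 2) hf hg)
    simpa [iteratedFDeriv_two_apply] using this.symm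
  have hsymm := (show ContDiffAt ℝ 2 (f - g) β from hf.sub hg).isSymmSndFDerivAt
    (by simp [minSmoothness_of_isRCLikeNormedField])
  refine matrixOpNorm_le_of_isSymmetric hC (fun u v => ?_) (fun u => ?_)
  · rw [real_inner_comm, hinner, hinner, hsymm]
  · rw [real_inner_comm, hinner]
    simpa [iteratedFDeriv_two_apply] using h u

end HessianMatrix

theorem hessian_logPL_approx_bound_general
    {p n : ℕ} (K : ℝ)
    {J : Fin n → Type*} [∀ m, Fintype (J m)] [∀ m, Nonempty (J m)]
    (x : (m : Fin n) → J m → EuclideanSpace ℝ (Fin p))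
    (hx : ∀ m j, ‖x m j‖ ≤ K)
    (Jm : (m : Fin n) → Finset (J m))
    (logPL logPLtilde : EuclideanSpace ℝ (Fin p) → ℝ)
    (hPL : logPL = fun β =>
      ∑ m, ((∑ j ∈ Jm m, ⟪β, x m j⟫) -
        Real.log (∑ S ∈ Finset.powersetCard (Jm m).card (Finset.univ : Finset (J m)),
          Real.exp (∑ j ∈ S, ⟪β, x m j⟫))))
    (hPLt : logPLtilde = fun β =>
      ∑ m, ((∑ j ∈ Jm m, ⟪β, x m j⟫) -
        ((Jm m).card : ℝ) * Real.log (∑ j, Real.exp ⟪β, x m j⟫))) :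
    ∀ β : EuclideanSpace ℝ (Fin p),
      DifferentiableAt ℝ logPL β ∧ DifferentiableAt ℝ (fderiv ℝ logPL) β ∧
      DifferentiableAt ℝ logPLtilde β ∧ DifferentiableAt ℝ (fderiv ℝ logPLtilde) β ∧
      matrixOpNorm (hessianMatrix logPL β - hessianMatrix logPLtilde β)
        ≤ 2 * K ^ 2 * Real.exp (4 * K * ‖β‖) *
            ∑ m, ((Jm m).card : ℝ) ^ 3 * (((Jm m).card : ℝ) - 1)
              / (Fintype.card (J m) : ℝ) := by
  classical
  intro β
  have hA : ∀ m, (powersetCard (Jm m).card (univ : Finset (J m))).Nonempty := fun m =>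
    powersetCard_nonempty.2 (card_le_univ _)
  have hlin : ∀ m, ContDiff ℝ 2 fun b : EuclideanSpace ℝ (Fin p) => ∑ j ∈ Jm m, ⟪b, x m j⟫ :=
    fun m => ContDiff.sum fun j _ => contDiff_id.inner ℝ contDiff_const
  have hPL' : logPL = fun b => ∑ m, (∑ j ∈ Jm m, ⟪b, x m j⟫
      - logSumExp (powersetCard (Jm m).card univ) (fun S => ∑ j ∈ S, x m j) b) := by
    simp only [hPL, logSumExp, sum_inner, real_inner_comm]
  have hPLt' : logPLtilde = fun b => ∑ m, (∑ j ∈ Jm m, ⟪b, x m j⟫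
      - (Jm m).card * logSumExp univ (x m) b) := by
    simp only [hPLt, logSumExp, real_inner_comm]
  have hdiff : logPL - logPLtilde = fun b => ∑ m, ((Jm m).card * logSumExp univ (x m) b
      - logSumExp (powersetCard (Jm m).card univ) (fun S => ∑ j ∈ S, x m j) b) := by
    ext b
    simp only [hPL', hPLt', Pi.sub_apply, ← sum_sub_distrib]
    exact sum_congr rfl fun m _ => by ring
  have hC2 : ContDiff ℝ 2 logPL := hPL' ▸ ContDiff.sum fun m _ =>
    (hlin m).sub (contDiff_logSumExp _ (hA m))
  have hC2' : ContDiff ℝ 2 logPLtilde := hPLt' ▸ ContDiff.sum fun m _ =>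
    (hlin m).sub (contDiff_const.mul (contDiff_logSumExp _ univ_nonempty))
  refine ⟨hC2.differentiable two_ne_zero β,
    (hC2.fderiv_right (m := 1) le_rfl).differentiable one_ne_zero β,
    hC2'.differentiable two_ne_zero β,
    (hC2'.fderiv_right (m := 1) le_rfl).differentiable one_ne_zero β,
    matrixOpNorm_hessianMatrix_sub_le hC2.contDiffAt hC2'.contDiffAt
      (mul_nonneg (by positivity) (sum_nonneg fun m _ =>
        div_nonneg (natCast_pow_three_mul_sub_one_nonneg _) (Nat.cast_nonneg _))) fun u => ?_⟩
  rw [hdiff, iteratedFDeriv_fun_sum_apply fun m _ => ((contDiff_const.mul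
    (contDiff_logSumExp _ univ_nonempty)).sub (contDiff_logSumExp _ (hA m))).contDiffAt,
    _root_.sum_apply, mul_sum, sum_mul]
  refine (abs_sum_le_sum_abs _ _).trans (sum_le_sum fun m _ => ?_)
  rw [iteratedFDeriv_two_mul_logSumExp_sub_logSumExp_apply _ _ _ univ_nonempty (hA m)]
  exact abs_weightedVar_exp_inner_sub_le (hx m) (card_le_univ (Jm m)) β u

/-- With bounded covariates `‖x_m(j)‖ ≤ K`, the exact multicast log partial
likelihood and its duplication approximation are twice differentiable at every
`β`, and their Hessian matrices differ (in operator/spectral norm) by at most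
`2K²·exp(4K‖β‖)·Σ_m |J_m|³(|J_m|−1)/|𝒥_m|`. -/
theorem hessian_logPL_approx_bound
    {p n : ℕ} (K : ℝ) (hK : 0 ≤ K)
    {J : Fin n → Type*} [∀ m, Fintype (J m)] [∀ m, Nonempty (J m)]
    (x : (m : Fin n) → J m → EuclideanSpace ℝ (Fin p))
    (hx : ∀ m j, ‖x m j‖ ≤ K)
    (Jm : (m : Fin n) → Finset (J m)) (hJm : ∀ m, (Jm m).Nonempty)
    (logPL logPLtilde : EuclideanSpace ℝ (Fin p) → ℝ)
    (hPL : logPL = fun β =>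
      ∑ m, ((∑ j ∈ Jm m, ⟪β, x m j⟫) -
        Real.log (∑ S ∈ Finset.powersetCard (Jm m).card (Finset.univ : Finset (J m)),
          Real.exp (∑ j ∈ S, ⟪β, x m j⟫))))
    (hPLt : logPLtilde = fun β =>
      ∑ m, ((∑ j ∈ Jm m, ⟪β, x m j⟫) -
        ((Jm m).card : ℝ) * Real.log (∑ j, Real.exp ⟪β, x m j⟫))) :
    ∀ β : EuclideanSpace ℝ (Fin p),
      DifferentiableAt ℝ logPL β ∧ DifferentiableAt ℝ (fderiv ℝ logPL) β ∧
      DifferentiableAt ℝ logPLtilde β ∧ DifferentiableAt ℝ (fderiv ℝ logPLtilde) β ∧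
      matrixOpNorm (hessianMatrix logPL β - hessianMatrix logPLtilde β)
        ≤ 2 * K ^ 2 * Real.exp (4 * K * ‖β‖) *
            ∑ m, ((Jm m).card : ℝ) ^ 3 * (((Jm m).card : ℝ) - 1)
              / (Fintype.card (J m) : ℝ) :=
  hessian_logPL_approx_bound_general K x hx Jm logPL logPLtilde hPL hPLt
end

section
/- Let g : ℝ^p → ℝ^p be differentiable on a convex open set D₀ with derivative Dg that is K-Lipschitz on D₀ (i.e., ‖Dg(x) − Dg(y)‖ ≤ K‖x − y‖ in operator norm for all x, y ∈ D₀). Let x̂ ∈ D₀ be such that Dg(x̂) is invertible with ‖[Dg(x̂)]⁻¹‖ ≤ B and ‖g(x̂)‖ ≤ ε. If h := B² K ε satisfies 0 < h ≤ 1/2 and the closed ball {x : ‖x − x̂‖ ≤ 2Bε} is contained in D₀, then there exists x̃ with g(x̃) = 0 and ‖x̃ − x̂‖ ≤ 2 B ε. -/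
/-!
Write `h = B²Kε` and `A = (Dg x̂)⁻¹`. The simplified Newton map `T x = x - A (g x)` sends the
ball of radius `r = 2Bε` about `x̂` into itself:
`T x - x̂ = -A (g x̂) - A (g x - g x̂ - Dg x̂ (x - x̂))`, and the quadratic Taylor bound
`K / 2 * r ^ 2` on the remainder gives `‖T x - x̂‖ ≤ Bε (1 + 2h) ≤ r`.
Its derivative `1 - A ∘ Dg x = A ∘ (Dg x̂ - Dg x)` has norm at most `BKr = 2h ≤ 1` there, so `T`
is nonexpansive, though not a contraction when `h = 1/2`. A nonexpansive self-map of a compact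
convex set still has a fixed point (compose it with homotheties of ratio `c < 1` and let `c → 1`),
and fixed points of `T` are zeros of `g`.
-/

open Metric Set Filter Topology

section FixedPoint

variable {E : Type*} [NormedAddCommGroup E] [NormedSpace ℝ E] {s : Set E} {f : E → E}

/-- Banach's theorem for the contraction `x ↦ x₀ + c • (f x - x₀)` of `s`. -/
theorem Convex.exists_norm_sub_le_of_lipschitzOnWith_one (hsv : Convex ℝ s)
    (hsc : IsComplete s) (hsb : Bornology.IsBounded s) (hmaps : MapsTo f s s)
    (hf : LipschitzOnWith 1 f s)
    {x₀ : E} (hx₀ : x₀ ∈ s) {c : ℝ} (hc₀ : 0 ≤ c) (hc₁ : c < 1) :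
    ∃ x ∈ s, ‖f x - x‖ ≤ (1 - c) * diam s := by
  set F : E → E := fun x => x₀ + c • (f x - x₀) with hF
  have hFmaps : MapsTo F s s := fun x hx => hsv.add_smul_sub_mem hx₀ (hmaps hx) ⟨hc₀, hc₁.le⟩
  have hFlip : LipschitzOnWith ⟨c, hc₀⟩ F s := by
    refine lipschitzOnWith_iff_norm_sub_le.2 fun x hx y hy => ?_
    have hxy : F x - F y = c • (f x - f y) := by simp only [hF, smul_sub]; abel
    rw [hxy, norm_smul, Real.norm_of_nonneg hc₀]
    have hfxy := hf.norm_sub_le hx hy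
    rw [NNReal.coe_one, one_mul] at hfxy
    exact mul_le_mul_of_nonneg_left hfxy hc₀
  obtain ⟨x, hx, hFx, -⟩ := ContractingWith.exists_fixedPoint' hsc hFmaps
    ⟨by exact_mod_cast hc₁, hFlip.mapsToRestrict hFmaps⟩ hx₀ (edist_ne_top _ _)
  refine ⟨x, hx, ?_⟩
  have hfx : f x - x = (1 - c) • (f x - x₀) := by
    nth_rewrite 2 [← hFx]
    simp only [hF, sub_smul, one_smul]
    abel
  rw [hfx, norm_smul, Real.norm_of_nonneg (by linarith), ← dist_eq_norm]
  exact mul_le_mul_of_nonneg_left (dist_le_diam_of_mem hsb (hmaps hx) hx₀) (by linarith)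

/-- The displacement `‖f x - x‖` attains its minimum on `s`, and that minimum is at most
`(1 - c) * diam s` for every `c < 1`. -/
theorem IsCompact.exists_fixedPoint_of_lipschitzOnWith_one (hsc : IsCompact s)
    (hsv : Convex ℝ s) (hne : s.Nonempty) (hmaps : MapsTo f s s) (hf : LipschitzOnWith 1 f s) :
    ∃ x ∈ s, f x = x := by
  obtain ⟨x, hx, hmin⟩ := hsc.exists_isMinOn hne (hf.continuousOn.sub continuousOn_id).norm
  refine ⟨x, hx, sub_eq_zero.1 (norm_le_zero_iff.1 ?_)⟩
  have hlim : Tendsto (fun c : ℝ => (1 - c) * diam s) (𝓝[<] 1) (𝓝 0) := by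
    have : Continuous fun c : ℝ => (1 - c) * diam s := by fun_prop
    simpa using (this.tendsto 1).mono_left nhdsWithin_le_nhds
  refine ge_of_tendsto hlim (eventually_of_mem (Ico_mem_nhdsLT zero_lt_one) fun c hc => ?_)
  obtain ⟨y, hy, hfy⟩ := hsv.exists_norm_sub_le_of_lipschitzOnWith_one hsc.isComplete
    hsc.isBounded hmaps hf hx hc.1 hc.2
  exact (hmin hy).trans hfy

end FixedPoint

/-- Along the segment from `x` to `y` the first-order remainder has derivative bounded by
`K t ‖y - x‖²`, which integrates to `K / 2 * ‖y - x‖²`. -/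
theorem Convex.norm_image_sub_sub_fderiv_le_of_lipschitz {E F : Type*} [NormedAddCommGroup E]
    [NormedSpace ℝ E] [NormedAddCommGroup F] [NormedSpace ℝ F] {f : E → F} {f' : E → E →L[ℝ] F}
    {s : Set E} {K : ℝ} (hs : Convex ℝ s) (hf : ∀ x ∈ s, HasFDerivAt f (f' x) x)
    (hf' : ∀ x ∈ s, ∀ y ∈ s, ‖f' x - f' y‖ ≤ K * ‖x - y‖) {x y : E} (hx : x ∈ s) (hy : y ∈ s) :
    ‖f y - f x - f' x (y - x)‖ ≤ K / 2 * ‖y - x‖ ^ 2 := by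
  set u := y - x
  set γ : ℝ → E := fun t => x + t • u with hγ
  have hγs : ∀ t ∈ Icc (0 : ℝ) 1, γ t ∈ s := fun t ht => hs.add_smul_sub_mem hx hy ht
  have hγx : ∀ t ∈ Icc (0 : ℝ) 1, ‖γ t - x‖ = t * ‖u‖ := fun t ht => by
    simp [hγ, norm_smul, abs_of_nonneg ht.1]
  set φ : ℝ → F := fun t => f (γ t) - f x - t • f' x u with hφ
  have hφ' : ∀ t ∈ Icc (0 : ℝ) 1, HasDerivAt φ (f' (γ t) u - f' x u) t := fun t ht => by
    have hγ' : HasDerivAt γ u t := by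
      have := ((hasDerivAt_id t).smul_const u).const_add x
      rwa [one_smul] at this
    exact (((hf _ (hγs t ht)).comp_hasDerivAt t hγ').sub_const (f x)).sub
      (by simpa using (hasDerivAt_id t).smul_const (f' x u))
  have hbound : ∀ t ∈ Ico (0 : ℝ) 1, ‖f' (γ t) u - f' x u‖ ≤ K * ‖u‖ ^ 2 * t := fun t ht =>
    calc ‖f' (γ t) u - f' x u‖ = ‖(f' (γ t) - f' x) u‖ := rfl
      _ ≤ ‖f' (γ t) - f' x‖ * ‖u‖ := ContinuousLinearMap.le_opNorm _ _
      _ ≤ K * ‖γ t - x‖ * ‖u‖ := by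
        gcongr; exact hf' _ (hγs t (Ico_subset_Icc_self ht)) _ hx
      _ = K * ‖u‖ ^ 2 * t := by rw [hγx t (Ico_subset_Icc_self ht)]; ring
  have hquad : ∀ t, HasDerivAt (fun t => K / 2 * ‖u‖ ^ 2 * t ^ 2) (K * ‖u‖ ^ 2 * t) t :=
    fun t => ((hasDerivAt_pow 2 t).const_mul (K / 2 * ‖u‖ ^ 2)).congr_deriv (by push_cast; ring)
  have := image_norm_le_of_norm_deriv_right_le_deriv_boundary
    (fun t ht => (hφ' t ht).continuousAt.continuousWithinAt)
    (fun t ht => (hφ' t (Ico_subset_Icc_self ht)).hasDerivWithinAt) (by simp [hφ, hγ]) hquad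
    hbound (right_mem_Icc.2 zero_le_one)
  simpa [hφ, hγ, u] using this

section SimplifiedNewton

variable {E F : Type*} [NormedAddCommGroup E] [NormedSpace ℝ E] [NormedAddCommGroup F]
  [NormedSpace ℝ F] {g : E → F} {Dg : E → E →L[ℝ] F} {A : F →L[ℝ] E} {x₀ : E} {B K ε : ℝ}

/-- `A` stands for the inverse of the derivative of `g` at a base point, frozen along the
iteration. -/
def simplifiedNewtonMap (A : F →L[ℝ] E) (g : E → F) (x : E) : E := x - A (g x)

theorem isFixedPt_simplifiedNewtonMap_iff (hA : Function.Injective A) {x : E} :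
    Function.IsFixedPt (simplifiedNewtonMap A g) x ↔ g x = 0 := by
  rw [Function.IsFixedPt, simplifiedNewtonMap, sub_eq_self, map_eq_zero_iff A hA]

theorem mapsTo_simplifiedNewtonMap_closedBall (hK : 0 ≤ K)
    (hderiv : ∀ x ∈ closedBall x₀ (2 * B * ε), HasFDerivAt g (Dg x) x)
    (hLip : ∀ x ∈ closedBall x₀ (2 * B * ε), ∀ y ∈ closedBall x₀ (2 * B * ε),
      ‖Dg x - Dg y‖ ≤ K * ‖x - y‖)
    (hA : A.comp (Dg x₀) = ContinuousLinearMap.id ℝ E) (hAB : ‖A‖ ≤ B) (hgε : ‖g x₀‖ ≤ ε)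
    (hh : B ^ 2 * K * ε ≤ 1 / 2) :
    MapsTo (simplifiedNewtonMap A g) (closedBall x₀ (2 * B * ε)) (closedBall x₀ (2 * B * ε)) := by
  intro x hx
  have hB : 0 ≤ B := (norm_nonneg _).trans hAB
  have hε : 0 ≤ ε := (norm_nonneg _).trans hgε
  have hx₀ : x₀ ∈ closedBall x₀ (2 * B * ε) := mem_closedBall_self (by positivity)
  set R := g x - g x₀ - Dg x₀ (x - x₀) with hRdef
  have hR : ‖R‖ ≤ K / 2 * (2 * B * ε) ^ 2 :=
    ((convex_closedBall _ _).norm_image_sub_sub_fderiv_le_of_lipschitz hderiv hLip hx₀ hx).trans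
      (by gcongr; exact mem_closedBall_iff_norm.1 hx)
  have hTx : simplifiedNewtonMap A g x - x₀ = -(A (g x₀) + A R) := by
    have hAx : A (Dg x₀ (x - x₀)) = x - x₀ := by simpa using congr($hA (x - x₀))
    have hgx : g x = g x₀ + R + Dg x₀ (x - x₀) := by rw [hRdef]; abel
    rw [simplifiedNewtonMap, ← map_add, hgx, map_add, hAx]
    abel
  rw [mem_closedBall_iff_norm, hTx, norm_neg]
  calc ‖A (g x₀) + A R‖ ≤ ‖A‖ * ‖g x₀‖ + ‖A‖ * ‖R‖ :=
        norm_add_le_of_le (A.le_opNorm _) (A.le_opNorm _)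
    _ ≤ B * ε + B * (K / 2 * (2 * B * ε) ^ 2) := by gcongr
    _ = B * ε + 2 * (B ^ 2 * K * ε) * (B * ε) := by ring
    _ ≤ 2 * B * ε := by nlinarith [mul_nonneg hB hε]

theorem lipschitzOnWith_one_simplifiedNewtonMap (hK : 0 ≤ K) (hε : 0 ≤ ε)
    (hderiv : ∀ x ∈ closedBall x₀ (2 * B * ε), HasFDerivAt g (Dg x) x)
    (hLip : ∀ x ∈ closedBall x₀ (2 * B * ε), ∀ y ∈ closedBall x₀ (2 * B * ε),
      ‖Dg x - Dg y‖ ≤ K * ‖x - y‖)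
    (hA : A.comp (Dg x₀) = ContinuousLinearMap.id ℝ E) (hAB : ‖A‖ ≤ B)
    (hh : B ^ 2 * K * ε ≤ 1 / 2) :
    LipschitzOnWith 1 (simplifiedNewtonMap A g) (closedBall x₀ (2 * B * ε)) := by
  have hB : 0 ≤ B := (norm_nonneg _).trans hAB
  have hx₀ : x₀ ∈ closedBall x₀ (2 * B * ε) := mem_closedBall_self (by positivity)
  refine (convex_closedBall _ _).lipschitzOnWith_of_nnnorm_hasFDerivWithin_le
    (f' := fun z => A.comp (Dg x₀ - Dg z)) (fun z hz => ?_) (fun z hz => ?_)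
  · rw [ContinuousLinearMap.comp_sub, hA]
    exact ((hasFDerivAt_id z).sub (A.hasFDerivAt.comp z (hderiv z hz))).hasFDerivWithinAt
  · rw [← NNReal.coe_le_coe, coe_nnnorm, NNReal.coe_one]
    calc ‖A.comp (Dg x₀ - Dg z)‖ ≤ ‖A‖ * ‖Dg x₀ - Dg z‖ := A.opNorm_comp_le _
      _ ≤ B * (K * (2 * B * ε)) := by
        gcongr
        exact (hLip _ hx₀ _ hz).trans
          (by gcongr; exact mem_closedBall_iff_norm'.1 hz)
      _ = 2 * (B ^ 2 * K * ε) := by ring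
      _ ≤ 1 := by linarith

end SimplifiedNewton

theorem newton_zero_exists_general
    {p : ℕ} (B K ε : ℝ) (hB : 0 ≤ B) (hK : 0 ≤ K) (hε : 0 ≤ ε)
    (g : EuclideanSpace ℝ (Fin p) → EuclideanSpace ℝ (Fin p))
    (Dg : EuclideanSpace ℝ (Fin p) →
      EuclideanSpace ℝ (Fin p) →L[ℝ] EuclideanSpace ℝ (Fin p))
    (D₀ : Set (EuclideanSpace ℝ (Fin p)))
    (hderiv : ∀ x ∈ D₀, HasFDerivAt g (Dg x) x)
    (hLip : ∀ x ∈ D₀, ∀ y ∈ D₀, ‖Dg x - Dg y‖ ≤ K * ‖x - y‖)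
    (xhat : EuclideanSpace ℝ (Fin p))
    (inv : EuclideanSpace ℝ (Fin p) →L[ℝ] EuclideanSpace ℝ (Fin p))
    (hinvl : inv.comp (Dg xhat) = ContinuousLinearMap.id ℝ _)
    (hinvr : (Dg xhat).comp inv = ContinuousLinearMap.id ℝ _)
    (hinvB : ‖inv‖ ≤ B) (hgε : ‖g xhat‖ ≤ ε)
    (hhalf : B ^ 2 * K * ε ≤ 1 / 2)
    (hball : Metric.closedBall xhat (2 * B * ε) ⊆ D₀) :
    ∃ xtilde : EuclideanSpace ℝ (Fin p), g xtilde = 0 ∧ ‖xtilde - xhat‖ ≤ 2 * B * ε := by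
  have hderiv' : ∀ x ∈ closedBall xhat (2 * B * ε), HasFDerivAt g (Dg x) x :=
    fun x hx => hderiv x (hball hx)
  have hLip' : ∀ x ∈ closedBall xhat (2 * B * ε), ∀ y ∈ closedBall xhat (2 * B * ε),
      ‖Dg x - Dg y‖ ≤ K * ‖x - y‖ :=
    fun x hx y hy => hLip x (hball hx) y (hball hy)
  have hinv : Function.Injective inv :=
    Function.LeftInverse.injective (g := Dg xhat) fun v => by simpa using congr($hinvr v)
  obtain ⟨x, hx, hfix⟩ :=
    (isCompact_closedBall xhat (2 * B * ε)).exists_fixedPoint_of_lipschitzOnWith_one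
      (convex_closedBall _ _) (nonempty_closedBall.2 (by positivity))
      (mapsTo_simplifiedNewtonMap_closedBall hK hderiv' hLip' hinvl hinvB hgε hhalf)
      (lipschitzOnWith_one_simplifiedNewtonMap hK hε hderiv' hLip' hinvl hinvB hhalf)
  exact ⟨x, (isFixedPt_simplifiedNewtonMap_iff hinv).1 hfix, mem_closedBall_iff_norm.1 hx⟩

/-- Quantitative Newton/Kantorovich step for `g : ℝ^p → ℝ^p`: if `g` is
differentiable on a convex open set `D₀` with `K`-Lipschitz derivative, `xhat ∈ D₀`
is a point at which the derivative has a bounded inverse of norm at most `B`,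
`‖g(xhat)‖ ≤ ε`, `h := B²Kε` satisfies `0 < h ≤ 1/2`, and the closed ball of
radius `2Bε` around `xhat` lies in `D₀`, then there exists `xtilde` with `g(xtilde) = 0`
and `‖xtilde − xhat‖ ≤ 2Bε`. -/
theorem newton_zero_exists
    {p : ℕ} (B K ε : ℝ) (hB : 0 ≤ B) (hK : 0 ≤ K) (hε : 0 ≤ ε)
    (g : EuclideanSpace ℝ (Fin p) → EuclideanSpace ℝ (Fin p))
    (Dg : EuclideanSpace ℝ (Fin p) →
      EuclideanSpace ℝ (Fin p) →L[ℝ] EuclideanSpace ℝ (Fin p))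
    (D₀ : Set (EuclideanSpace ℝ (Fin p)))
    (hopen : IsOpen D₀) (hconv : Convex ℝ D₀)
    (hderiv : ∀ x ∈ D₀, HasFDerivAt g (Dg x) x)
    (hLip : ∀ x ∈ D₀, ∀ y ∈ D₀, ‖Dg x - Dg y‖ ≤ K * ‖x - y‖)
    (xhat : EuclideanSpace ℝ (Fin p)) (hxhat : xhat ∈ D₀)
    (inv : EuclideanSpace ℝ (Fin p) →L[ℝ] EuclideanSpace ℝ (Fin p))
    (hinvl : inv.comp (Dg xhat) = ContinuousLinearMap.id ℝ _)
    (hinvr : (Dg xhat).comp inv = ContinuousLinearMap.id ℝ _)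
    (hinvB : ‖inv‖ ≤ B) (hgε : ‖g xhat‖ ≤ ε)
    (hpos : 0 < B ^ 2 * K * ε) (hhalf : B ^ 2 * K * ε ≤ 1 / 2)
    (hball : Metric.closedBall xhat (2 * B * ε) ⊆ D₀) :
    ∃ xtilde : EuclideanSpace ℝ (Fin p), g xtilde = 0 ∧ ‖xtilde - xhat‖ ≤ 2 * B * ε :=
  newton_zero_exists_general B K ε hB hK hε g Dg D₀ hderiv hLip xhat inv hinvl hinvr hinvB hgε hhalf
    hball
end
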